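/- arXiv:1611.08748 — 5 statements merged into one kernel-verified Lean document; each statement's English description precedes it below -/
import Mathlib

section
/- Suppose x₀ ∈ [0,1] is an isolated point of local maximum of m, i.e. there exists ε₀ > 0 such that m(x₀) > m(y) for every y ∈ ((x₀ − ε₀, x₀ + ε₀) ∩ [0,1]) \ {x₀}. Then limsup_{s→∞} λ₁ᴺ(s) ≤ c(x₀). -/
/-!
Test the Rayleigh quotient with a bump `φ` centred at `x₀`, equal to `1` on a ball of radius
`r / 2` and supported in a ball of radius `r` on which `c ≤ c x₀ + η`. The potential term is then
at most `(c x₀ + η)` times the weighted mass. The derivative of `φ` lives on the annulus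
`r / 2 ≤ |x - x₀| ≤ r`, where compactness and the strict maximum give `m ≤ β < m x₀`, while
`m ≥ α > β` on an interval near `x₀` where `φ = 1`; so the kinetic term divided by the mass is
`O(e^{-2 (α - β) s})`. A uniform lower bound `min c ≤ λ₁ᴺ(s)` makes the `limsup` meaningful.
-/

open MeasureTheory Filter Set

/-- The Neumann principal eigenvalue of `-φ'' - 2 s m' φ' + c φ = λ φ` on `(0,1)`,
via its variational characterization. -/
noncomputable def lambdaN (m c : ℝ → ℝ) (s : ℝ) : ℝ :=
  sInf {l : ℝ | ∃ φ : ℝ → ℝ, ContDiff ℝ 1 φ ∧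
    (∫ x in (0:ℝ)..1, Real.exp (2 * s * m x) * (φ x) ^ 2) = 1 ∧
    l = ∫ x in (0:ℝ)..1, Real.exp (2 * s * m x) * ((deriv φ x) ^ 2 + c x * (φ x) ^ 2)}

open Metric Topology

noncomputable def weightedMass (m : ℝ → ℝ) (s : ℝ) (φ : ℝ → ℝ) : ℝ :=
  ∫ x in (0:ℝ)..1, Real.exp (2 * s * m x) * φ x ^ 2

noncomputable def weightedEnergy (m c : ℝ → ℝ) (s : ℝ) (φ : ℝ → ℝ) : ℝ :=
  ∫ x in (0:ℝ)..1, Real.exp (2 * s * m x) * (deriv φ x ^ 2 + c x * φ x ^ 2)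

def rayleighSet (m c : ℝ → ℝ) (s : ℝ) : Set ℝ :=
  {l | ∃ φ : ℝ → ℝ, ContDiff ℝ 1 φ ∧ weightedMass m s φ = 1 ∧ l = weightedEnergy m c s φ}

theorem lambdaN_eq_sInf_rayleighSet (m c : ℝ → ℝ) (s : ℝ) :
    lambdaN m c s = sInf (rayleighSet m c s) :=
  rfl

section Rayleigh

variable {m c φ : ℝ → ℝ} {s : ℝ}

theorem weightedMass_const_mul (r : ℝ) :
    weightedMass m s (fun x => r * φ x) = r ^ 2 * weightedMass m s φ := by
  simp only [weightedMass, ← intervalIntegral.integral_const_mul]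
  congr 1 with x
  ring

theorem weightedEnergy_const_mul (r : ℝ) :
    weightedEnergy m c s (fun x => r * φ x) = r ^ 2 * weightedEnergy m c s φ := by
  simp only [weightedEnergy, deriv_const_mul_field', ← intervalIntegral.integral_const_mul]
  congr 1 with x
  ring

theorem mul_weightedMass_le_weightedEnergy (hm : Continuous m) (hc : Continuous c)
    (hφ : ContDiff ℝ 1 φ) {L : ℝ} (hL : ∀ x ∈ Icc (0:ℝ) 1, L ≤ c x) :
    L * weightedMass m s φ ≤ weightedEnergy m c s φ := by
  have hφc := hφ.continuous
  have hφ'c := hφ.continuous_deriv le_rfl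
  rw [weightedMass, weightedEnergy, ← intervalIntegral.integral_const_mul]
  refine intervalIntegral.integral_mono_on zero_le_one
    ((by fun_prop : Continuous _).intervalIntegrable _ _)
    ((by fun_prop : Continuous _).intervalIntegrable _ _) fun x hx => ?_
  have := mul_le_mul_of_nonneg_right (hL x hx) (sq_nonneg (φ x))
  nlinarith [Real.exp_pos (2 * s * m x), sq_nonneg (deriv φ x)]

theorem bddBelow_rayleighSet (hm : Continuous m) (hc : Continuous c) :
    BddBelow (rayleighSet m c s) := by
  obtain ⟨L, hL⟩ := isCompact_Icc.bddBelow_image hc.continuousOn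
  refine ⟨L, ?_⟩
  rintro _ ⟨φ, hφ, hmass, rfl⟩
  have := mul_weightedMass_le_weightedEnergy (s := s) hm hc hφ fun x hx =>
    hL (mem_image_of_mem c hx)
  rwa [hmass, mul_one] at this

theorem weightedEnergy_div_weightedMass_mem_rayleighSet (hφ : ContDiff ℝ 1 φ)
    (hpos : 0 < weightedMass m s φ) :
    weightedEnergy m c s φ / weightedMass m s φ ∈ rayleighSet m c s := by
  set r := (√(weightedMass m s φ))⁻¹
  have hr : r ^ 2 = (weightedMass m s φ)⁻¹ := by rw [inv_pow, Real.sq_sqrt hpos.le]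
  refine ⟨fun x => r * φ x, contDiff_const.mul hφ, ?_, ?_⟩
  · rw [weightedMass_const_mul, hr, inv_mul_cancel₀ hpos.ne']
  · rw [weightedEnergy_const_mul, hr, div_eq_inv_mul]

theorem lambdaN_le_weightedEnergy_div (hm : Continuous m) (hc : Continuous c)
    (hφ : ContDiff ℝ 1 φ) (hpos : 0 < weightedMass m s φ) :
    lambdaN m c s ≤ weightedEnergy m c s φ / weightedMass m s φ :=
  csInf_le (bddBelow_rayleighSet hm hc) (weightedEnergy_div_weightedMass_mem_rayleighSet hφ hpos)

theorem le_lambdaN (hm : Continuous m) (hc : Continuous c) {L : ℝ}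
    (hL : ∀ x ∈ Icc (0:ℝ) 1, L ≤ c x) : L ≤ lambdaN m c s := by
  have hpos : 0 < weightedMass m s (fun _ => 1) :=
    intervalIntegral.intervalIntegral_pos_of_pos_on
      ((by fun_prop : Continuous _).intervalIntegrable _ _)
      (fun x _ => by positivity) zero_lt_one
  rw [lambdaN_eq_sInf_rayleighSet]
  refine le_csInf ⟨_, weightedEnergy_div_weightedMass_mem_rayleighSet contDiff_const hpos⟩ ?_
  rintro _ ⟨φ, hφ, hmass, rfl⟩
  have := mul_weightedMass_le_weightedEnergy (s := s) hm hc hφ hL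
  rwa [hmass, mul_one] at this

theorem exp_mul_le_weightedMass (hm : Continuous m) (hφ : Continuous φ) (hs : 0 ≤ s)
    {a b α : ℝ} (hab : a ≤ b) (habI : Icc a b ⊆ Icc 0 1) (hφab : EqOn φ 1 (Icc a b))
    (hmab : ∀ x ∈ Icc a b, α ≤ m x) :
    (b - a) * Real.exp (2 * s * α) ≤ weightedMass m s φ := by
  have h0a : 0 ≤ a := (habI (left_mem_Icc.2 hab)).1
  have hb1 : b ≤ 1 := (habI (right_mem_Icc.2 hab)).2
  calc (b - a) * Real.exp (2 * s * α)
      = ∫ _ in a..b, Real.exp (2 * s * α) := by simp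
    _ ≤ ∫ x in a..b, Real.exp (2 * s * m x) * φ x ^ 2 := by
      refine intervalIntegral.integral_mono_on hab intervalIntegrable_const
        ((by fun_prop : Continuous _).intervalIntegrable _ _) fun x hx => ?_
      rw [hφab hx, Pi.one_apply, one_pow, mul_one, Real.exp_le_exp]
      exact mul_le_mul_of_nonneg_left (hmab x hx) (by positivity)
    _ ≤ weightedMass m s φ :=
      intervalIntegral.integral_mono_interval h0a hab hb1
        (ae_of_all _ fun x => by positivity) ((by fun_prop : Continuous _).intervalIntegrable _ _)

theorem weightedEnergy_le (hm : Continuous m) (hc : Continuous c) (hφ : ContDiff ℝ 1 φ)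
    (hs : 0 ≤ s) {C M β : ℝ} (hcφ : ∀ x ∈ Icc (0:ℝ) 1, φ x ≠ 0 → c x ≤ C)
    (hM : ∀ x ∈ Icc (0:ℝ) 1, deriv φ x ^ 2 ≤ M)
    (hmβ : ∀ x ∈ Icc (0:ℝ) 1, deriv φ x ≠ 0 → m x ≤ β) :
    weightedEnergy m c s φ ≤ M * Real.exp (2 * s * β) + C * weightedMass m s φ := by
  have hφc := hφ.continuous
  have hφ'c := hφ.continuous_deriv le_rfl
  have hkin : ∀ x ∈ Icc (0:ℝ) 1,
      Real.exp (2 * s * m x) * deriv φ x ^ 2 ≤ M * Real.exp (2 * s * β) := by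
    intro x hx
    rcases eq_or_ne (deriv φ x) 0 with h | h
    · rw [h, zero_pow two_ne_zero, mul_zero]
      exact mul_nonneg ((sq_nonneg _).trans (hM x hx)) (Real.exp_pos _).le
    · have hw : Real.exp (2 * s * m x) ≤ Real.exp (2 * s * β) :=
        Real.exp_le_exp.2 (mul_le_mul_of_nonneg_left (hmβ x hx h) (by positivity))
      rw [mul_comm M]
      exact mul_le_mul hw (hM x hx) (sq_nonneg _) (Real.exp_pos _).le
  have hpot : ∀ x ∈ Icc (0:ℝ) 1,
      Real.exp (2 * s * m x) * (c x * φ x ^ 2) ≤ C * (Real.exp (2 * s * m x) * φ x ^ 2) := by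
    intro x hx
    rcases eq_or_ne (φ x) 0 with h | h
    · simp [h]
    · have := mul_le_mul_of_nonneg_right (hcφ x hx h) (sq_nonneg (φ x))
      nlinarith [Real.exp_pos (2 * s * m x)]
  rw [weightedEnergy, weightedMass, ← intervalIntegral.integral_const_mul]
  rw [show M * Real.exp (2 * s * β) = ∫ _ in (0:ℝ)..1, M * Real.exp (2 * s * β) by simp,
    ← intervalIntegral.integral_add intervalIntegrable_const
      ((by fun_prop : Continuous _).intervalIntegrable _ _)]
  refine intervalIntegral.integral_mono_on zero_le_one
    ((by fun_prop : Continuous _).intervalIntegrable _ _)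
    ((by fun_prop : Continuous _).intervalIntegrable _ _) fun x hx => ?_
  linarith [hkin x hx, hpot x hx]

theorem lambdaN_le_add_exp (hm : Continuous m) (hc : Continuous c) (hφ : ContDiff ℝ 1 φ)
    (hs : 0 ≤ s) {a b α β C M : ℝ} (hab : a < b) (habI : Icc a b ⊆ Icc 0 1)
    (hφab : EqOn φ 1 (Icc a b)) (hmab : ∀ x ∈ Icc a b, α ≤ m x)
    (hcφ : ∀ x ∈ Icc (0:ℝ) 1, φ x ≠ 0 → c x ≤ C) (hM : ∀ x ∈ Icc (0:ℝ) 1, deriv φ x ^ 2 ≤ M)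
    (hmβ : ∀ x ∈ Icc (0:ℝ) 1, deriv φ x ≠ 0 → m x ≤ β) :
    lambdaN m c s ≤ C + M / (b - a) * Real.exp (-(2 * (α - β) * s)) := by
  have hmass := exp_mul_le_weightedMass hm hφ.continuous hs hab.le habI hφab hmab
  have hpos : 0 < weightedMass m s φ := lt_of_lt_of_le (by have := sub_pos.2 hab; positivity) hmass
  have hM0 : 0 ≤ M := (sq_nonneg _).trans (hM 0 (left_mem_Icc.2 zero_le_one))
  calc lambdaN m c s
      ≤ weightedEnergy m c s φ / weightedMass m s φ :=
        lambdaN_le_weightedEnergy_div hm hc hφ hpos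
    _ ≤ (M * Real.exp (2 * s * β) + C * weightedMass m s φ) / weightedMass m s φ :=
        div_le_div_of_nonneg_right (weightedEnergy_le hm hc hφ hs hcφ hM hmβ) hpos.le
    _ = C + M * Real.exp (2 * s * β) / weightedMass m s φ := by
        rw [add_div, mul_div_cancel_right₀ _ hpos.ne', add_comm]
    _ ≤ C + M * Real.exp (2 * s * β) / ((b - a) * Real.exp (2 * s * α)) := by
        gcongr
    _ = C + M / (b - a) * Real.exp (-(2 * (α - β) * s)) := by
        rw [show -(2 * (α - β) * s) = 2 * s * β - 2 * s * α by ring, Real.exp_sub]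
        field_simp

theorem limsup_lambdaN_le (hm : Continuous m) (hc : Continuous c) (hφ : ContDiff ℝ 1 φ)
    {a b α β C M : ℝ} (hab : a < b) (habI : Icc a b ⊆ Icc 0 1)
    (hφab : EqOn φ 1 (Icc a b)) (hmab : ∀ x ∈ Icc a b, α ≤ m x)
    (hcφ : ∀ x ∈ Icc (0:ℝ) 1, φ x ≠ 0 → c x ≤ C) (hM : ∀ x ∈ Icc (0:ℝ) 1, deriv φ x ^ 2 ≤ M)
    (hmβ : ∀ x ∈ Icc (0:ℝ) 1, deriv φ x ≠ 0 → m x ≤ β) (hβα : β < α) :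
    limsup (lambdaN m c) atTop ≤ C := by
  obtain ⟨L, hL⟩ := isCompact_Icc.bddBelow_image hc.continuousOn
  have hdecay : Tendsto (fun s => C + M / (b - a) * Real.exp (-(2 * (α - β) * s))) atTop (𝓝 C) := by
    have : Tendsto (fun s => 2 * (α - β) * s) atTop atTop :=
      tendsto_id.const_mul_atTop (by linarith)
    simpa using
      ((Real.tendsto_exp_neg_atTop_nhds_zero.comp this).const_mul (M / (b - a))).const_add C
  calc limsup (lambdaN m c) atTop
      ≤ limsup (fun s => C + M / (b - a) * Real.exp (-(2 * (α - β) * s))) atTop :=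
        limsup_le_limsup
          (eventually_ge_atTop 0 |>.mono fun s hs =>
            lambdaN_le_add_exp hm hc hφ hs hab habI hφab hmab hcφ hM hmβ)
          (isCoboundedUnder_le_of_le atTop fun s =>
            le_lambdaN hm hc fun x hx => hL (mem_image_of_mem c hx))
          hdecay.isBoundedUnder_le
    _ = C := hdecay.limsup_eq

end Rayleigh

theorem ContDiffBump.dist_mem_Icc_of_deriv_ne_zero {x₀ y : ℝ} (f : ContDiffBump x₀)
    (hy : deriv f y ≠ 0) : dist y x₀ ∈ Icc f.rIn f.rOut := by
  refine ⟨not_lt.1 fun h => hy ?_, ?_⟩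
  · rw [(f.eventuallyEq_one_of_mem_ball (mem_ball.2 h)).deriv_eq]
    exact deriv_const y 1
  · simpa [f.tsupport_eq] using support_deriv_subset (Function.mem_support.2 hy)

theorem IsCompact.exists_lt_forall_le {K : Set ℝ} (hK : IsCompact K) {f : ℝ → ℝ}
    (hf : ContinuousOn f K) {t : ℝ} (hft : ∀ x ∈ K, f x < t) : ∃ β < t, ∀ x ∈ K, f x ≤ β := by
  rcases K.eq_empty_or_nonempty with rfl | hne
  · exact ⟨t - 1, by linarith, by simp⟩
  · obtain ⟨z, hz, hmax⟩ := hK.exists_isMaxOn hne hf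
    exact ⟨f z, hft z hz, fun x hx => hmax hx⟩

theorem exists_Icc_subset_of_eventually {x₀ : ℝ} (hx₀ : x₀ ∈ Icc (0:ℝ) 1) {p : ℝ → Prop}
    (hp : ∀ᶠ x in 𝓝 x₀, p x) : ∃ a b, a < b ∧ Icc a b ⊆ Icc 0 1 ∧ ∀ x ∈ Icc a b, p x := by
  obtain ⟨r, hr, hpr⟩ := Metric.eventually_nhds_iff.1 hp
  refine ⟨max 0 (x₀ - r / 2), min 1 (x₀ + r / 2), ?_, ?_, fun x hx => hpr ?_⟩
  · simp only [max_lt_iff, lt_min_iff]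
    refine ⟨⟨zero_lt_one, ?_⟩, ?_, ?_⟩ <;> linarith [hx₀.1, hx₀.2]
  · exact Icc_subset_Icc (le_max_left _ _) (min_le_left _ _)
  · rw [Real.dist_eq, abs_lt]
    constructor <;> linarith [le_max_right 0 (x₀ - r / 2), min_le_right 1 (x₀ + r / 2), hx.1, hx.2]

theorem exists_lt_forall_le_on_annulus_of_isolated_max {m : ℝ → ℝ} (hm : Continuous m)
    {x₀ ε₀ ρ ε : ℝ}
    (hmax : ∀ y ∈ (Ioo (x₀ - ε₀) (x₀ + ε₀) ∩ Icc (0:ℝ) 1) \ {x₀}, m y < m x₀)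
    (hρ : 0 < ρ) (hε : ε < ε₀) :
    ∃ β < m x₀, ∀ y ∈ Icc (0:ℝ) 1, dist y x₀ ∈ Icc ρ ε → m y ≤ β := by
  have hK : IsCompact (Icc (0:ℝ) 1 ∩ {y | dist y x₀ ∈ Icc ρ ε}) :=
    isCompact_Icc.inter_right (isClosed_Icc.preimage (continuous_id.dist continuous_const))
  obtain ⟨β, hβ, hmβ⟩ := hK.exists_lt_forall_le hm.continuousOn fun y ⟨hy, hρy, hyε⟩ => by
    refine hmax y ⟨⟨?_, hy⟩, fun h => ?_⟩
    · rw [← Real.ball_eq_Ioo]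
      exact mem_ball.2 (hyε.trans_lt hε)
    · rw [mem_singleton_iff.1 h, dist_self] at hρy
      linarith
  exact ⟨β, hβ, fun y hy hyd => hmβ y ⟨hy, hyd⟩⟩

/-- If `x₀ ∈ [0,1]` is an isolated point of local maximum of `m`, then
`limsup_{s→∞} λ₁ᴺ(s) ≤ c x₀`. -/
theorem limsup_lambdaN_le_of_isolated_local_max
    (m c : ℝ → ℝ) (hm : ContDiff ℝ 2 m) (hc : Continuous c)
    (x₀ : ℝ) (hx₀ : x₀ ∈ Set.Icc (0:ℝ) 1)
    (hmax : ∃ ε₀ > (0:ℝ),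
      ∀ y ∈ (Set.Ioo (x₀ - ε₀) (x₀ + ε₀) ∩ Set.Icc (0:ℝ) 1) \ {x₀}, m y < m x₀) :
    Filter.limsup (lambdaN m c) Filter.atTop ≤ c x₀ := by
  obtain ⟨ε₀, hε₀, hmax⟩ := hmax
  have hmc : Continuous m := hm.continuous
  refine le_of_forall_pos_le_add fun η hη => ?_
  obtain ⟨ε, hε, hcε⟩ := Metric.eventually_nhds_iff.1
    (hc.continuousAt.eventually (gt_mem_nhds (lt_add_of_pos_right (c x₀) hη)))
  set r := min ε (ε₀ / 2)
  have hr : 0 < r := lt_min hε (by linarith)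
  let φ : ContDiffBump x₀ := ⟨r / 2, r, by linarith, by linarith⟩
  obtain ⟨β, hβ, hmβ⟩ := exists_lt_forall_le_on_annulus_of_isolated_max hmc hmax
    (half_pos hr) ((min_le_right _ _).trans_lt (half_lt_self hε₀))
  have hα : (m x₀ + β) / 2 < m x₀ := by linarith
  obtain ⟨a, b, hab, habI, hmab⟩ := exists_Icc_subset_of_eventually hx₀
    ((hmc.continuousAt.eventually (lt_mem_nhds hα)).and (ball_mem_nhds x₀ (half_pos hr)))
  obtain ⟨M, hM⟩ := (isCompact_Icc (a := (0:ℝ)) (b := 1)).bddAbove_image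
    ((φ.contDiff.continuous_deriv le_rfl).pow 2).continuousOn
  have hcφ : ∀ x, φ x ≠ 0 → c x ≤ c x₀ + η := fun x hx =>
    (hcε ((mem_ball.1 (φ.support_eq ▸ hx : x ∈ ball x₀ r)).trans_le (min_le_left _ _))).le
  exact limsup_lambdaN_le hmc hc φ.contDiff hab habI
    (fun x hx => φ.one_of_mem_closedBall (ball_subset_closedBall (hmab x hx).2))
    (fun x hx => (hmab x hx).1.le) (fun x _ => hcφ x) (fun x hx => hM (mem_image_of_mem _ hx))
    (fun x hx hd => hmβ x hx (φ.dist_mem_Icc_of_deriv_ne_zero hd)) (by linarith)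
end

section
/- Suppose 0 < a < b < 1 and there exists ε₀ > 0 such that: m is constant on [a,b]; m is non-decreasing on [a−ε₀, a] and on [b, b+ε₀]; and for every ε ∈ (0, ε₀) there exist x ∈ (a−ε, a) with m'(x) > 0 and y ∈ (b, b+ε) with m'(y) > 0 (so [a,b] is a segment of local maximum of type [a^I, b^I]). Then limsup_{s→∞} λ₁ᴺ(s) ≤ λ₁^{ND}(a,b). -/
/-!
Let `ψ` be a test function for `λ₁ᴺᴰ(a,b)`, so `ψ(b) = 0`. Cut it off smoothly to a `C¹` function
`Φ` supported in `(u, b)`, where `u < a` is so close to `a` that `m < m(a)` on `(u, a)` (`m` is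
non-decreasing there and has points of positive derivative arbitrarily close to `a`), and with
`Φ = ψ` on `[a, b - ε]`. Dividing the weighted Rayleigh quotient of `Φ` by `e^{2 s m(a)}`, the part
on `[a, b]`, where `m` is constant, does not depend on `s`, while the part on `(u, a)` carries the
weight `e^{2 s (m - m(a))} → 0`. Hence `limsup λ₁ᴺ(s)` is at most the Rayleigh quotient of `Φ` on
`(a, b)`, which tends to that of `ψ` as `ε → 0`: since `ψ` vanishes at `b`, the term `ψ χ'` coming
from the cutoff stays bounded, and dominated convergence applies.
-/

open MeasureTheory Filter Set

/-- The principal eigenvalue of `-φ'' + c φ = λ φ` on `(a,b)`, with a Dirichlet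
condition at `a` iff `dirA = true` and at `b` iff `dirB = true`
(Neumann, i.e. no constraint, otherwise), via its variational characterization. -/
noncomputable def lambdaIJ (c : ℝ → ℝ) (dirA dirB : Bool) (a b : ℝ) : ℝ :=
  sInf {l : ℝ | ∃ φ : ℝ → ℝ, ContDiff ℝ 1 φ ∧
    (dirA = true → φ a = 0) ∧ (dirB = true → φ b = 0) ∧
    (∫ x in a..b, (φ x) ^ 2) = 1 ∧
    l = ∫ x in a..b, ((deriv φ x) ^ 2 + c x * (φ x) ^ 2)}

open Topology

noncomputable def lambdaNSet (m c : ℝ → ℝ) (s : ℝ) : Set ℝ :=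
  {l : ℝ | ∃ φ : ℝ → ℝ, ContDiff ℝ 1 φ ∧
    (∫ x in (0:ℝ)..1, Real.exp (2 * s * m x) * (φ x) ^ 2) = 1 ∧
    l = ∫ x in (0:ℝ)..1, Real.exp (2 * s * m x) * ((deriv φ x) ^ 2 + c x * (φ x) ^ 2)}

noncomputable def lambdaIJSet (c : ℝ → ℝ) (dirA dirB : Bool) (a b : ℝ) : Set ℝ :=
  {l : ℝ | ∃ φ : ℝ → ℝ, ContDiff ℝ 1 φ ∧
    (dirA = true → φ a = 0) ∧ (dirB = true → φ b = 0) ∧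
    (∫ x in a..b, (φ x) ^ 2) = 1 ∧
    l = ∫ x in a..b, ((deriv φ x) ^ 2 + c x * (φ x) ^ 2)}

noncomputable def energy (c φ : ℝ → ℝ) (a b : ℝ) : ℝ :=
  ∫ x in a..b, ((deriv φ x) ^ 2 + c x * (φ x) ^ 2)

theorem energy_congr_of_eqOn {c φ ψ : ℝ → ℝ} {a b : ℝ} (h : EqOn φ ψ (uIoo a b)) :
    energy c φ a b = energy c ψ a b :=
  intervalIntegral.integral_congr_uIoo fun x hx => by
    simp only [h hx, (h.eventuallyEq_of_mem (isOpen_Ioo.mem_nhds hx)).deriv_eq]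

section Normalization

variable {w c φ : ℝ → ℝ} {u v : ℝ}

theorem integral_mul_sq_const_mul (k : ℝ) :
    ∫ x in u..v, w x * (k * φ x) ^ 2 = k ^ 2 * ∫ x in u..v, w x * φ x ^ 2 := by
  rw [← intervalIntegral.integral_const_mul]
  congr 1 with x
  ring

theorem integral_mul_energy_const_mul (k : ℝ) :
    ∫ x in u..v, w x * ((deriv (fun y => k * φ y) x) ^ 2 + c x * (k * φ x) ^ 2) =
      k ^ 2 * ∫ x in u..v, w x * ((deriv φ x) ^ 2 + c x * (φ x) ^ 2) := by
  rw [← intervalIntegral.integral_const_mul, deriv_const_mul_field']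
  congr 1 with x
  ring

end Normalization

theorem div_mem_lambdaNSet {m : ℝ → ℝ} (c : ℝ → ℝ) {φ : ℝ → ℝ} (hφ : ContDiff ℝ 1 φ) {s : ℝ}
    (hpos : 0 < ∫ x in (0:ℝ)..1, Real.exp (2 * s * m x) * φ x ^ 2) :
    (∫ x in (0:ℝ)..1, Real.exp (2 * s * m x) * (deriv φ x ^ 2 + c x * φ x ^ 2)) /
      (∫ x in (0:ℝ)..1, Real.exp (2 * s * m x) * φ x ^ 2) ∈ lambdaNSet m c s := by
  set D := ∫ x in (0:ℝ)..1, Real.exp (2 * s * m x) * φ x ^ 2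
  refine ⟨fun x => (Real.sqrt D)⁻¹ * φ x, contDiff_const.mul hφ, ?_, ?_⟩
  · rw [integral_mul_sq_const_mul, inv_pow, Real.sq_sqrt hpos.le, inv_mul_cancel₀ hpos.ne']
  · rw [integral_mul_energy_const_mul, inv_pow, Real.sq_sqrt hpos.le, inv_mul_eq_div]

theorem div_mem_lambdaIJSet (c : ℝ → ℝ) {dirA dirB : Bool} {a b : ℝ} {φ : ℝ → ℝ}
    (hφ : ContDiff ℝ 1 φ) (ha : dirA = true → φ a = 0) (hb : dirB = true → φ b = 0)
    (hpos : 0 < ∫ x in a..b, φ x ^ 2) :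
    energy c φ a b / (∫ x in a..b, φ x ^ 2) ∈ lambdaIJSet c dirA dirB a b := by
  set D := ∫ x in a..b, φ x ^ 2
  have h := integral_mul_sq_const_mul (w := fun _ => 1) (φ := φ) (u := a) (v := b) (Real.sqrt D)⁻¹
  have h' := integral_mul_energy_const_mul (w := fun _ => 1) (c := c) (φ := φ) (u := a) (v := b)
    (Real.sqrt D)⁻¹
  simp only [one_mul] at h h'
  refine ⟨fun x => (Real.sqrt D)⁻¹ * φ x, contDiff_const.mul hφ, fun h => by simp [ha h],
    fun h => by simp [hb h], ?_, ?_⟩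
  · rw [h, inv_pow, Real.sq_sqrt hpos.le, inv_mul_cancel₀ hpos.ne']
  · rw [h', inv_pow, Real.sq_sqrt hpos.le, inv_mul_eq_div, energy]

theorem lambdaIJSet_nonempty (c : ℝ → ℝ) (dirA dirB : Bool) {a b : ℝ} (hab : a < b) :
    (lambdaIJSet c dirA dirB a b).Nonempty := by
  have hφ : ContDiff ℝ 1 fun x : ℝ => (x - a) * (b - x) := by fun_prop
  refine ⟨_, div_mem_lambdaIJSet c hφ (fun _ => by simp) (fun _ => by simp) ?_⟩
  refine intervalIntegral.intervalIntegral_pos_of_pos_on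
    ((hφ.continuous.pow 2).intervalIntegrable _ _) (fun x hx => ?_) hab
  exact pow_pos (mul_pos (sub_pos.2 hx.1) (sub_pos.2 hx.2)) 2

section LambdaN

variable {m c : ℝ → ℝ}

theorem exists_forall_le_of_mem_lambdaNSet (hm : Continuous m) (hc : Continuous c) :
    ∃ C, ∀ s, ∀ l ∈ lambdaNSet m c s, C ≤ l := by
  obtain ⟨C, hC⟩ := (isCompact_Icc (a := (0:ℝ)) (b := 1)).bddBelow_image hc.continuousOn
  refine ⟨C, fun s l ⟨φ, hφ, hnorm, hl⟩ => ?_⟩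
  have hw : Continuous fun x => Real.exp (2 * s * m x) := by fun_prop
  have hφ' : Continuous (deriv φ) := hφ.continuous_deriv le_rfl
  rw [hl]
  calc C = C * ∫ x in (0:ℝ)..1, Real.exp (2 * s * m x) * φ x ^ 2 := by rw [hnorm, mul_one]
    _ = ∫ x in (0:ℝ)..1, C * (Real.exp (2 * s * m x) * φ x ^ 2) :=
      (intervalIntegral.integral_const_mul _ _).symm
    _ ≤ ∫ x in (0:ℝ)..1, Real.exp (2 * s * m x) * (deriv φ x ^ 2 + c x * φ x ^ 2) := by
      refine intervalIntegral.integral_mono_on zero_le_one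
        ((continuous_const.mul (hw.mul (hφ.continuous.pow 2))).intervalIntegrable _ _)
        ((hw.mul ((hφ'.pow 2).add (hc.mul (hφ.continuous.pow 2)))).intervalIntegrable _ _)
        fun x hx => ?_
      have hCx : C ≤ c x := hC (mem_image_of_mem c hx)
      nlinarith [mul_nonneg (Real.exp_pos (2 * s * m x)).le
        (add_nonneg (sq_nonneg (deriv φ x)) (mul_nonneg (sub_nonneg.2 hCx) (sq_nonneg (φ x))))]

theorem lambdaNSet_nonempty (c : ℝ → ℝ) (hm : Continuous m) (s : ℝ) :
    (lambdaNSet m c s).Nonempty :=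
  ⟨_, div_mem_lambdaNSet (φ := fun _ => 1) c contDiff_const
    (intervalIntegral.intervalIntegral_pos_of_pos_on
      ((by fun_prop : Continuous _).intervalIntegrable _ _)
      (fun x _ => by simpa using Real.exp_pos (2 * s * m x)) zero_lt_one)⟩

theorem lambdaN_le_div (hm : Continuous m) (hc : Continuous c) {φ : ℝ → ℝ}
    (hφ : ContDiff ℝ 1 φ) {s : ℝ} (hpos : 0 < ∫ x in (0:ℝ)..1, Real.exp (2 * s * m x) * φ x ^ 2) :
    lambdaN m c s ≤
      (∫ x in (0:ℝ)..1, Real.exp (2 * s * m x) * (deriv φ x ^ 2 + c x * φ x ^ 2)) /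
        (∫ x in (0:ℝ)..1, Real.exp (2 * s * m x) * φ x ^ 2) :=
  have ⟨C, hC⟩ := exists_forall_le_of_mem_lambdaNSet hm hc
  csInf_le ⟨C, hC s⟩ (div_mem_lambdaNSet c hφ hpos)

theorem limsup_lambdaN_le_of_tendsto (hm : Continuous m) (hc : Continuous c) {f : ℝ → ℝ} {L : ℝ}
    (hle : ∀ s, lambdaN m c s ≤ f s) (hf : Tendsto f atTop (𝓝 L)) :
    limsup (lambdaN m c) atTop ≤ L := by
  obtain ⟨C, hC⟩ := exists_forall_le_of_mem_lambdaNSet hm hc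
  have hcobdd : IsCoboundedUnder (· ≤ ·) atTop (lambdaN m c) :=
    isCoboundedUnder_le_of_le atTop fun s => le_csInf (lambdaNSet_nonempty c hm s) (hC s)
  calc limsup (lambdaN m c) atTop ≤ limsup f atTop :=
        limsup_le_limsup (.of_forall hle) hcobdd hf.isBoundedUnder_le
    _ = L := hf.limsup_eq

end LambdaN

theorem lt_of_monotoneOn_of_exists_deriv_pos {m : ℝ → ℝ} {a ε₀ : ℝ}
    (hmono : MonotoneOn m (Icc (a - ε₀) a))
    (hderiv : ∀ ε ∈ Ioo 0 ε₀, ∃ x ∈ Ioo (a - ε) a, 0 < deriv m x) :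
    ∀ x ∈ Ioo (a - ε₀) a, m x < m a := by
  intro x hx
  obtain ⟨y, hy, hy'⟩ := hderiv (a - x) ⟨by linarith [hx.2], by linarith [hx.1]⟩
  have hxI : x ∈ Icc (a - ε₀) a := ⟨hx.1.le, hx.2.le⟩
  have haI : a ∈ Icc (a - ε₀) a := ⟨by linarith [hx.1, hx.2], le_rfl⟩
  refine (hmono hxI haI hx.2.le).lt_of_ne fun hxa => hy'.ne' ?_
  have hconst : EqOn m (fun _ => m a) (Icc x a) := fun t ht =>
    have htI : t ∈ Icc (a - ε₀) a := ⟨hx.1.le.trans ht.1, ht.2⟩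
    le_antisymm (hmono htI haI ht.2) (hxa ▸ hmono hxI htI ht.1)
  rw [(hconst.eventuallyEq_of_mem (Icc_mem_nhds (by linarith [hy.1]) hy.2)).deriv_eq, deriv_const]

theorem deriv_eq_zero_of_eqOn_const {φ : ℝ → ℝ} {s : Set ℝ} {x k : ℝ}
    (hφ : EqOn φ (fun _ => k) s) (hs : s ∈ 𝓝 x) : deriv φ x = 0 := by
  rw [(hφ.eventuallyEq_of_mem hs).deriv_eq, deriv_const]

theorem tendsto_integral_exp_mul_atTop {f g : ℝ → ℝ} {u v : ℝ} (huv : u ≤ v)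
    (hf : Continuous f) (hg : Continuous g) (hneg : ∀ x ∈ Ioo u v, f x < 0) :
    Tendsto (fun s => ∫ x in u..v, Real.exp (s * f x) * g x) atTop (𝓝 0) := by
  have hIoc : ∀ᵐ x, x ∈ uIoc u v → f x < 0 := by
    filter_upwards [volume.ae_ne v] with x hxv hx
    rw [uIoc_of_le huv] at hx
    exact hneg x ⟨hx.1, lt_of_le_of_ne hx.2 hxv⟩
  simpa using intervalIntegral.tendsto_integral_filter_of_dominated_convergence
    (F := fun (s : ℝ) x => Real.exp (s * f x) * g x) (f := fun _ => 0) (l := atTop)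
    (fun x => |g x|) (.of_forall fun s => (by fun_prop : Continuous _).aestronglyMeasurable)
    (by
      filter_upwards [eventually_ge_atTop 0] with s hs
      filter_upwards [hIoc] with x hx hxI
      rw [norm_mul, Real.norm_of_nonneg (Real.exp_pos _).le, Real.norm_eq_abs]
      exact mul_le_of_le_one_left (abs_nonneg _)
        (Real.exp_le_one_iff.2 (mul_nonpos_of_nonneg_of_nonpos hs (hx hxI).le)))
    (hg.abs.intervalIntegrable _ _)
    (by
      filter_upwards [hIoc] with x hx hxI
      simpa using (Real.tendsto_exp_atBot.comp
        (tendsto_id.atTop_mul_const_of_neg (hx hxI))).mul_const (g x))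

section Concentration

variable {m g : ℝ → ℝ} {u a b : ℝ}

theorem integral_exp_mul_eq_of_eqOn_zero (s : ℝ) (hm : Continuous m) (hg : Continuous g)
    (hu : 0 ≤ u) (hab : a ≤ b) (hb : b ≤ 1) (hconst : ∀ x ∈ Icc a b, m x = m a)
    (hg0 : EqOn g 0 (Icc u b)ᶜ) :
    ∫ x in (0:ℝ)..1, Real.exp (2 * s * m x) * g x =
      Real.exp (2 * s * m a) *
        ((∫ x in u..a, Real.exp (2 * s * (m x - m a)) * g x) + ∫ x in a..b, g x) := by
  have hi : ∀ p q : ℝ, IntervalIntegrable (fun x => Real.exp (2 * s * m x) * g x) volume p q :=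
    fun p q => (by fun_prop : Continuous _).intervalIntegrable p q
  have hzero : ∀ p q, uIoo p q ⊆ (Icc u b)ᶜ →
      ∫ x in p..q, Real.exp (2 * s * m x) * g x = 0 := fun p q hpq => by
    rw [intervalIntegral.integral_congr_uIoo (g := 0) fun x hx => by simp [hg0 (hpq hx)]]
    simp
  rw [← intervalIntegral.integral_add_adjacent_intervals (hi 0 u) (hi u 1),
    ← intervalIntegral.integral_add_adjacent_intervals (hi u a) (hi a 1),
    ← intervalIntegral.integral_add_adjacent_intervals (hi a b) (hi b 1),
    hzero 0 u (by rw [uIoo_of_le hu]; exact fun x hx hxI => hx.2.not_ge hxI.1),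
    hzero b 1 (by rw [uIoo_of_le hb]; exact fun x hx hxI => hx.1.not_ge hxI.2),
    mul_add, ← intervalIntegral.integral_const_mul, ← intervalIntegral.integral_const_mul]
  have hlayer : ∀ x, Real.exp (2 * s * m x) * g x =
      Real.exp (2 * s * m a) * (Real.exp (2 * s * (m x - m a)) * g x) := fun x => by
    rw [← mul_assoc, ← Real.exp_add]; ring_nf
  have hplateau : EqOn (fun x => Real.exp (2 * s * m x) * g x)
      (fun x => Real.exp (2 * s * m a) * g x) (uIcc a b) := fun x hx => by
    rw [uIcc_of_le hab] at hx
    simp only [hconst x hx]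
  rw [intervalIntegral.integral_congr hplateau]
  simp only [hlayer, zero_add, add_zero]

theorem limsup_lambdaN_le_div_of_eqOn_zero {c Φ : ℝ → ℝ} (hm : Continuous m) (hc : Continuous c)
    (hu : 0 ≤ u) (hua : u ≤ a) (hab : a ≤ b) (hb : b ≤ 1) (hconst : ∀ x ∈ Icc a b, m x = m a)
    (hlt : ∀ x ∈ Ioo u a, m x < m a) (hΦ : ContDiff ℝ 1 Φ) (hΦ0 : EqOn Φ 0 (Ioo u b)ᶜ)
    (hpos : 0 < ∫ x in a..b, Φ x ^ 2) :
    limsup (lambdaN m c) atTop ≤ energy c Φ a b / ∫ x in a..b, Φ x ^ 2 := by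
  have hΦ' : Continuous (deriv Φ) := hΦ.continuous_deriv le_rfl
  have hderiv0 : EqOn (deriv Φ) 0 (Icc u b)ᶜ := fun x hx =>
    deriv_eq_zero_of_eqOn_const (hΦ0.mono (compl_subset_compl.2 Ioo_subset_Icc_self))
      (isClosed_Icc.isOpen_compl.mem_nhds hx)
  have hsplit := fun g hg hg0 s => integral_exp_mul_eq_of_eqOn_zero (g := g) s hm hg hu hab hb
    hconst hg0
  have hlayer : ∀ g : ℝ → ℝ, Continuous g →
      Tendsto (fun s => ∫ x in u..a, Real.exp (2 * s * (m x - m a)) * g x) atTop (𝓝 0) :=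
    fun g hg => (tendsto_integral_exp_mul_atTop hua (hm.sub continuous_const) hg
      fun x hx => sub_neg.2 (hlt x hx)).comp (tendsto_id.const_mul_atTop two_pos)
  have hE0 : EqOn (fun x => deriv Φ x ^ 2 + c x * Φ x ^ 2) 0 (Icc u b)ᶜ := fun x hx => by
    simp [hderiv0 hx, hΦ0 (compl_subset_compl.2 Ioo_subset_Icc_self hx)]
  have hN0 : EqOn (fun x => Φ x ^ 2) 0 (Icc u b)ᶜ := fun x hx => by
    simp [hΦ0 (compl_subset_compl.2 Ioo_subset_Icc_self hx)]
  have hE := hlayer (fun x => deriv Φ x ^ 2 + c x * Φ x ^ 2) (by fun_prop)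
  have hN := hlayer (fun x => Φ x ^ 2) (by fun_prop)
  -- After cancelling `exp (2 s m(a))` the quotient is `(A₁ s + energy) / (A₂ s + ∫ Φ²)`,
  -- where the boundary-layer integrals `Aᵢ s` on `(u, a)` tend to `0`.
  refine limsup_lambdaN_le_of_tendsto hm hc (fun s => ?_)
    (by simpa using (hE.add_const _).div (hN.add_const _) (by simpa using hpos.ne'))
  have hlayer_nonneg : 0 ≤ ∫ x in u..a, Real.exp (2 * s * (m x - m a)) * Φ x ^ 2 :=
    intervalIntegral.integral_nonneg hua fun x _ => by positivity
  have h := lambdaN_le_div hm hc hΦ (s := s)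
    (by rw [hsplit _ (by fun_prop) hN0]; exact mul_pos (Real.exp_pos _) (by linarith))
  rwa [hsplit _ (by fun_prop) hE0, hsplit _ (by fun_prop) hN0,
    mul_div_mul_left _ _ (Real.exp_pos _).ne'] at h

end Concentration

theorem exists_abs_mul_deriv_smoothTransition_le :
    ∃ C, ∀ t, |t * deriv Real.smoothTransition t| ≤ C := by
  have hT : ContDiff ℝ 1 Real.smoothTransition := Real.smoothTransition.contDiff
  have hsupp : HasCompactSupport fun t => t * deriv Real.smoothTransition t := by
    refine HasCompactSupport.intro (isCompact_Icc (a := (0:ℝ)) (b := 1)) fun t ht => ?_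
    rcases not_and_or.1 ht with h | h
    · rw [deriv_eq_zero_of_eqOn_const (k := 0) (fun y hy => Real.smoothTransition.zero_of_nonpos
        (le_of_lt hy)) (Iio_mem_nhds (not_le.1 h)), mul_zero]
    · rw [deriv_eq_zero_of_eqOn_const (k := 1) (fun y hy => Real.smoothTransition.one_of_one_le
        (le_of_lt hy)) (Ioi_mem_nhds (not_le.1 h)), mul_zero]
  simpa using hsupp.exists_bound_of_continuous (continuous_id.mul (hT.continuous_deriv le_rfl))

theorem norm_sq_add_mul_sq_le {d K c y z : ℝ} (hd : |d| ≤ K) (hy : y ^ 2 ≤ z ^ 2) :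
    ‖d ^ 2 + c * y ^ 2‖ ≤ K ^ 2 + |c| * z ^ 2 := by
  rw [Real.norm_eq_abs]
  refine (abs_add_le _ _).trans ?_
  rw [abs_mul, abs_sq, abs_sq]
  exact add_le_add (sq_le_sq' (abs_le.1 hd).1 (abs_le.1 hd).2)
    (mul_le_mul_of_nonneg_left hy (abs_nonneg _))

section Cutoff

noncomputable def rightCutoff (b ε x : ℝ) : ℝ := Real.smoothTransition ((b - x) / ε)

variable {ψ c : ℝ → ℝ} {a b ε x : ℝ}

theorem contDiff_rightCutoff : ContDiff ℝ 1 (rightCutoff b ε) :=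
  (Real.smoothTransition.contDiff (n := 1)).comp (by fun_prop)

theorem rightCutoff_nonneg : 0 ≤ rightCutoff b ε x := Real.smoothTransition.nonneg _

theorem rightCutoff_le_one : rightCutoff b ε x ≤ 1 := Real.smoothTransition.le_one _

theorem rightCutoff_eq_one (hε : 0 < ε) (hx : x ≤ b - ε) : rightCutoff b ε x = 1 :=
  Real.smoothTransition.one_of_one_le ((one_le_div hε).2 (by linarith))

theorem rightCutoff_eq_zero (hε : 0 ≤ ε) (hx : b ≤ x) : rightCutoff b ε x = 0 :=
  Real.smoothTransition.zero_of_nonpos (div_nonpos_of_nonpos_of_nonneg (by linarith) hε)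

theorem sq_mul_rightCutoff_le {y : ℝ} : (y * rightCutoff b ε x) ^ 2 ≤ y ^ 2 := by
  rw [mul_pow]
  exact mul_le_of_le_one_right (sq_nonneg _) (pow_le_one₀ rightCutoff_nonneg rightCutoff_le_one)

theorem abs_sub_mul_deriv_rightCutoff_le {C : ℝ}
    (hC : ∀ t, |t * deriv Real.smoothTransition t| ≤ C) (hε : 0 < ε) (x : ℝ) :
    |(b - x) * deriv (rightCutoff b ε) x| ≤ C := by
  have hd : HasDerivAt (rightCutoff b ε) (deriv Real.smoothTransition ((b - x) / ε) * (-1 / ε)) x :=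
    ((Real.smoothTransition.contDiff (n := 1)).differentiable one_ne_zero _).hasDerivAt.comp x
      (((hasDerivAt_id x).const_sub b).div_const ε)
  rw [hd.deriv, ← abs_neg]
  convert hC ((b - x) / ε) using 2
  field_simp

/-- `ψ χ'` stays bounded because `ψ` vanishes to first order at `b`, where `χ'` is of size
`1 / ε` only on `[b - ε, b]`. -/
theorem exists_abs_deriv_mul_rightCutoff_le (hψ : ContDiff ℝ 1 ψ) (hψb : ψ b = 0) (a : ℝ) :
    ∃ K, ∀ ε > 0, ∀ x ∈ Icc a b, |deriv (fun y => ψ y * rightCutoff b ε y) x| ≤ K := by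
  obtain ⟨M, hM⟩ := (isCompact_Icc (a := a) (b := b)).exists_bound_of_continuousOn
    (hψ.continuous_deriv le_rfl).continuousOn
  obtain ⟨C, hC⟩ := exists_abs_mul_deriv_smoothTransition_le
  refine ⟨M + M * C, fun ε hε x hx => ?_⟩
  have hψd := hψ.differentiable one_ne_zero
  have hM0 : 0 ≤ M := (norm_nonneg _).trans (hM x hx)
  have hψx : |ψ x| ≤ M * (b - x) := by
    have := Convex.norm_image_sub_le_of_norm_deriv_le (fun y _ => hψd y) hM (convex_Icc a b)
      (right_mem_Icc.2 (hx.1.trans hx.2)) hx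
    rwa [hψb, sub_zero, Real.norm_eq_abs, Real.norm_eq_abs, abs_sub_comm,
      abs_of_nonneg (sub_nonneg.2 hx.2)] at this
  rw [deriv_fun_mul (hψd x) (contDiff_rightCutoff.differentiable one_ne_zero x)]
  calc |deriv ψ x * rightCutoff b ε x + ψ x * deriv (rightCutoff b ε) x|
      ≤ |deriv ψ x| * rightCutoff b ε x + |ψ x| * |deriv (rightCutoff b ε) x| :=
        (abs_add_le _ _).trans_eq (by rw [abs_mul, abs_mul, abs_of_nonneg rightCutoff_nonneg])
    _ ≤ M * 1 + M * (b - x) * |deriv (rightCutoff b ε) x| :=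
        add_le_add (mul_le_mul (hM x hx) rightCutoff_le_one rightCutoff_nonneg hM0)
          (mul_le_mul_of_nonneg_right hψx (abs_nonneg _))
    _ ≤ M + M * C := by
        rw [mul_one, mul_assoc, ← abs_of_nonneg (sub_nonneg.2 hx.2), ← abs_mul]
        gcongr
        exact abs_sub_mul_deriv_rightCutoff_le hC hε x

theorem eventually_eventuallyEq_mul_rightCutoff (ψ : ℝ → ℝ) (hx : x < b) :
    ∀ᶠ ε in 𝓝[>] 0, (fun y => ψ y * rightCutoff b ε y) =ᶠ[𝓝 x] ψ := by
  filter_upwards [Ioo_mem_nhdsGT (sub_pos.2 hx)] with ε hε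
  filter_upwards [Iic_mem_nhds (show x < b - ε by linarith [hε.2])] with y hy
  rw [rightCutoff_eq_one hε.1 hy, mul_one]

theorem ae_eventually_eventuallyEq_mul_rightCutoff (ψ : ℝ → ℝ) (hab : a ≤ b) :
    ∀ᵐ x, x ∈ uIoc a b → ∀ᶠ ε in 𝓝[>] 0, (fun y => ψ y * rightCutoff b ε y) =ᶠ[𝓝 x] ψ := by
  filter_upwards [volume.ae_ne b] with x hxb hx
  rw [uIoc_of_le hab] at hx
  exact eventually_eventuallyEq_mul_rightCutoff ψ (lt_of_le_of_ne hx.2 hxb)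

theorem tendsto_integral_sq_mul_rightCutoff (hψ : Continuous ψ) (hab : a ≤ b) :
    Tendsto (fun ε => ∫ x in a..b, (ψ x * rightCutoff b ε x) ^ 2) (𝓝[>] 0)
      (𝓝 (∫ x in a..b, ψ x ^ 2)) := by
  refine intervalIntegral.tendsto_integral_filter_of_dominated_convergence (fun x => ψ x ^ 2)
    (.of_forall fun ε => ((hψ.mul contDiff_rightCutoff.continuous).pow 2).aestronglyMeasurable)
    (.of_forall fun ε => .of_forall fun x _ => ?_) ((hψ.pow 2).intervalIntegrable _ _) ?_
  · exact (Real.norm_of_nonneg (sq_nonneg _)).trans_le sq_mul_rightCutoff_le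
  · filter_upwards [ae_eventually_eventuallyEq_mul_rightCutoff ψ hab] with x hx hxI
    refine tendsto_const_nhds.congr' ((hx hxI).mono fun ε hε => ?_)
    have h := hε.eq_of_nhds
    beta_reduce at h ⊢
    rw [h]

theorem tendsto_energy_mul_rightCutoff (hψ : ContDiff ℝ 1 ψ) (hψb : ψ b = 0) (hc : Continuous c)
    (hab : a ≤ b) :
    Tendsto (fun ε => energy c (fun y => ψ y * rightCutoff b ε y) a b) (𝓝[>] 0)
      (𝓝 (energy c ψ a b)) := by
  obtain ⟨K, hK⟩ := exists_abs_deriv_mul_rightCutoff_le hψ hψb a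
  have hψc := hψ.continuous
  refine intervalIntegral.tendsto_integral_filter_of_dominated_convergence
    (fun x => K ^ 2 + |c x| * ψ x ^ 2) (.of_forall fun ε => ?_) ?_
    ((continuous_const.add (hc.abs.mul (hψc.pow 2))).intervalIntegrable _ _) ?_
  · have := (hψ.mul (contDiff_rightCutoff (b := b) (ε := ε))).continuous_deriv le_rfl
    exact ((this.pow 2).add (hc.mul ((hψc.mul contDiff_rightCutoff.continuous).pow 2)))
      |>.aestronglyMeasurable
  · filter_upwards [self_mem_nhdsWithin] with ε hε
    refine .of_forall fun x hx => ?_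
    rw [uIoc_of_le hab] at hx
    have hD := hK ε hε x (Ioc_subset_Icc_self hx)
    exact norm_sq_add_mul_sq_le hD sq_mul_rightCutoff_le
  · filter_upwards [ae_eventually_eventuallyEq_mul_rightCutoff ψ hab] with x hx hxI
    refine tendsto_const_nhds.congr' ((hx hxI).mono fun ε hε => ?_)
    have h := hε.eq_of_nhds
    beta_reduce at h ⊢
    rw [hε.deriv_eq, h]

end Cutoff

theorem exists_contDiff_eqOn_Ici_eqOn_Iic_zero {ψ : ℝ → ℝ} (hψ : ContDiff ℝ 1 ψ) {u a : ℝ}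
    (hua : u < a) : ∃ ψ₀ : ℝ → ℝ, ContDiff ℝ 1 ψ₀ ∧ EqOn ψ₀ ψ (Ici a) ∧ EqOn ψ₀ 0 (Iic u) := by
  refine ⟨fun x => ψ x * Real.smoothTransition ((x - u) / (a - u)),
    hψ.mul ((Real.smoothTransition.contDiff (n := 1)).comp (by fun_prop)), fun x hx => ?_,
    fun x hx => ?_⟩
  · show ψ x * _ = ψ x
    rw [Real.smoothTransition.one_of_one_le
      ((one_le_div (sub_pos.2 hua)).2 (by linarith [mem_Ici.1 hx])), mul_one]
  · show ψ x * _ = 0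
    rw [Real.smoothTransition.zero_of_nonpos
      (div_nonpos_of_nonpos_of_nonneg (by linarith [mem_Iic.1 hx]) (sub_pos.2 hua).le), mul_zero]

/-- If `[a,b]` is a segment of local maximum of type `[aᴵ, bᴵ]`, then
`limsup_{s→∞} λ₁ᴺ(s) ≤ λ₁ᴺᴰ(a,b)`. -/
theorem limsup_lambdaN_le_lambdaND_of_segment_II
    (m c : ℝ → ℝ) (hm : ContDiff ℝ 2 m) (hc : Continuous c)
    (a b : ℝ) (ha : 0 < a) (hab : a < b) (hb : b < 1)
    (hseg : ∃ ε₀ > (0:ℝ),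
      (∀ x ∈ Set.Icc a b, m x = m a) ∧
      MonotoneOn m (Set.Icc (a - ε₀) a) ∧
      MonotoneOn m (Set.Icc b (b + ε₀)) ∧
      (∀ ε ∈ Set.Ioo (0:ℝ) ε₀,
        (∃ x ∈ Set.Ioo (a - ε) a, 0 < deriv m x) ∧
        (∃ y ∈ Set.Ioo b (b + ε), 0 < deriv m y))) :
    Filter.limsup (lambdaN m c) Filter.atTop ≤ lambdaIJ c false true a b := by
  obtain ⟨ε₀, hε₀, hconst, hmono, -, hderiv⟩ := hseg
  have hlt := lt_of_monotoneOn_of_exists_deriv_pos hmono fun ε hε => (hderiv ε hε).1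
  set u := max 0 (a - ε₀)
  have hua : u < a := max_lt ha (by linarith)
  refine le_csInf (lambdaIJSet_nonempty c false true hab) ?_
  rintro _ ⟨ψ, hψ, -, hψb, hnorm, rfl⟩
  -- Left of `u` nothing is known about `m`, so the test function has to vanish there.
  obtain ⟨ψ₀, hψ₀, hψ₀a, hψ₀u⟩ := exists_contDiff_eqOn_Ici_eqOn_Iic_zero hψ hua
  have hψ₀ψ : EqOn ψ₀ ψ (uIoo a b) := by
    rw [uIoo_of_le hab.le]
    exact hψ₀a.mono fun x hx => le_of_lt hx.1
  have hE := tendsto_energy_mul_rightCutoff hψ₀ ((hψ₀a (mem_Ici.2 hab.le)).trans (hψb rfl)) hc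
    hab.le
  have hN := tendsto_integral_sq_mul_rightCutoff hψ₀.continuous hab.le (b := b)
  rw [energy_congr_of_eqOn hψ₀ψ] at hE
  rw [intervalIntegral.integral_congr_uIoo (g := fun x => ψ x ^ 2) fun x hx => by
    simp only [hψ₀ψ hx], hnorm] at hN
  have hR := hE.div hN one_ne_zero
  rw [div_one] at hR
  refine ge_of_tendsto hR ?_
  filter_upwards [hN.eventually (lt_mem_nhds one_pos), self_mem_nhdsWithin] with ε hpos hε
  refine limsup_lambdaN_le_div_of_eqOn_zero hm.continuous hc (le_max_left _ _) hua.le hab.le hb.le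
    hconst (fun x hx => hlt x ⟨lt_of_le_of_lt (le_max_right _ _) hx.1, hx.2⟩)
    (hψ₀.mul contDiff_rightCutoff) (fun x hx => ?_) hpos
  rcases le_or_gt x u with hxu | hux
  · simp [hψ₀u (mem_Iic.2 hxu)]
  · simp [rightCutoff_eq_zero (le_of_lt hε) (not_lt.1 fun hxb => hx ⟨hux, hxb⟩)]
end

section
/- Let Ω₁ = {x ∈ (0,1) : m'(x) ≠ 0} ∪ {0 if m'(0) > 0} ∪ {1 if m'(1) < 0}. Then μ(Ω₁) = 0; that is, μ({x ∈ (0,1) : m'(x) ≠ 0}) = 0, μ({0}) = 0 whenever m'(0) > 0, and μ({1}) = 0 whenever m'(1) < 0. -/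
/-!
Testing the equation `w'' = (s² m'² + s m'' + c - λ) w` against `w η²` and integrating by parts
gives `s² ∫ m'² w² η² ≤ ∫ (η'² - (s m'' + c - λ) η²) w²`, because the boundary terms
`s w² m' η²` have the right sign as soon as `m'(0) η(0)² ≥ 0 ≥ m'(1) η(1)²`. The constant test
function gives `λ ≤ max c`, and `∫ w² = 1`, so the right-hand side is `O(s)`: hence
`∫ m'² η² w_s² = O(1/s)`, and in the limit `∫ m'² η² dμ = 0`. The weights `η = x (1 - x)`,
`1 - x` and `x` give the three claims.
-/

open MeasureTheory Filter Set

/-- `v` is a positive, `L²`-normalized principal eigenfunction (in the transformed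
variable `w = e^{s m} φ`) associated with the eigenvalue `lam` and parameter `s`. -/
def IsPrincipalEigenfunction (m c : ℝ → ℝ) (lam s : ℝ) (v : ℝ → ℝ) : Prop :=
  ContDiff ℝ 2 v ∧ (∀ x ∈ Set.Icc (0:ℝ) 1, 0 < v x) ∧
  (∀ x ∈ Set.Ioo (0:ℝ) 1,
    -(deriv (deriv v) x) + (s ^ 2 * (deriv m x) ^ 2 + s * deriv (deriv m) x + c x) * v x
      = lam * v x) ∧
  deriv v 0 = s * v 0 * deriv m 0 ∧ deriv v 1 = s * v 1 * deriv m 1 ∧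
  (∫ x in (0:ℝ)..1, (v x) ^ 2) = 1

open Topology

lemma lambdaN_le {m c : ℝ → ℝ} (hm : Continuous m) (hc : Continuous c) {M : ℝ}
    (hM : ∀ x ∈ Icc (0:ℝ) 1, |c x| ≤ M) (s : ℝ) : lambdaN m c s ≤ M := by
  set E : ℝ → ℝ := fun x => Real.exp (2 * s * m x)
  have hE : Continuous E := by fun_prop
  have hI : 0 < ∫ x in (0:ℝ)..1, E x :=
    intervalIntegral.intervalIntegral_pos_of_pos_on (hE.intervalIntegrable _ _)
      (fun x _ => Real.exp_pos _) one_pos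
  set r : ℝ := (Real.sqrt (∫ x in (0:ℝ)..1, E x))⁻¹
  have hr : r ^ 2 = (∫ x in (0:ℝ)..1, E x)⁻¹ := by rw [inv_pow, Real.sq_sqrt hI.le]
  have hnorm : (∫ x in (0:ℝ)..1, E x * r ^ 2) = 1 := by
    rw [intervalIntegral.integral_mul_const, hr, mul_inv_cancel₀ hI.ne']
  have hconst : (∫ x in (0:ℝ)..1, E x * ((deriv (fun _ => r) x) ^ 2 + c x * r ^ 2)) ≤ M := by
    simp only [deriv_const', zero_pow two_ne_zero, zero_add]
    calc (∫ x in (0:ℝ)..1, E x * (c x * r ^ 2))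
        ≤ ∫ x in (0:ℝ)..1, M * (E x * r ^ 2) := by
          refine intervalIntegral.integral_mono_on zero_le_one
            ((by fun_prop : Continuous _).intervalIntegrable _ _)
            ((by fun_prop : Continuous _).intervalIntegrable _ _) fun x hx => ?_
          have hEr : 0 ≤ E x * r ^ 2 := by positivity
          nlinarith [(abs_le.mp (hM x hx)).2]
      _ = M := by rw [intervalIntegral.integral_const_mul, hnorm, mul_one]
  by_cases hbdd : BddBelow {l : ℝ | ∃ φ : ℝ → ℝ, ContDiff ℝ 1 φ ∧
      (∫ x in (0:ℝ)..1, Real.exp (2 * s * m x) * (φ x) ^ 2) = 1 ∧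
      l = ∫ x in (0:ℝ)..1, Real.exp (2 * s * m x) * ((deriv φ x) ^ 2 + c x * (φ x) ^ 2)}
  · exact (csInf_le hbdd ⟨fun _ => r, contDiff_const, hnorm, rfl⟩).trans hconst
  · -- junk value: `sInf` of a set of reals that is unbounded below is `0`
    rw [lambdaN, Real.sInf_of_not_bddBelow hbdd]
    exact (abs_nonneg _).trans (hM 0 ⟨le_rfl, zero_le_one⟩)

lemma integral_potential_mul_sq_add_integral_sq_eq {w q η : ℝ → ℝ} {a b : ℝ} (hab : a ≤ b)
    (hw : ContDiff ℝ 2 w) (hq : Continuous q) (hη : ContDiff ℝ 1 η)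
    (hode : ∀ x ∈ Ioo a b, deriv (deriv w) x = q x * w x) :
    (∫ x in a..b, q x * w x ^ 2 * η x ^ 2)
      + ∫ x in a..b, (deriv w x * η x + w x * deriv η x) ^ 2
      = deriv w b * w b * η b ^ 2 - deriv w a * w a * η a ^ 2
        + ∫ x in a..b, w x ^ 2 * deriv η x ^ 2 := by
  have hw' : ContDiff ℝ 1 (deriv w) := hw.deriv'
  have hw'c := hw.continuous_deriv one_le_two
  have hw''c := hw'.continuous_deriv_one
  have hη'c := hη.continuous_deriv_one
  have hF : ∀ x, HasDerivAt (fun y => deriv w y * w y * η y ^ 2)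
      ((deriv (deriv w) x * w x + deriv w x * deriv w x) * η x ^ 2
        + deriv w x * w x * (2 * η x * deriv η x)) x := fun x =>
    (((hw'.differentiable one_ne_zero x).hasDerivAt.fun_mul
      (hw.differentiable two_ne_zero x).hasDerivAt).fun_mul
      ((hη.differentiable one_ne_zero x).hasDerivAt.fun_pow 2)).congr_deriv (by push_cast; ring)
  have hFTC := intervalIntegral.integral_eq_sub_of_hasDerivAt (fun x _ => hF x)
    ((by fun_prop : Continuous _).intervalIntegrable a b)
  rw [intervalIntegral.integral_of_le hab] at hFTC
  -- Off the endpoint `b`, replace `w''` by `q w` in the derivative of `w' w η²`.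
  rw [setIntegral_congr_ae (g := fun x => q x * w x ^ 2 * η x ^ 2
      + (deriv w x * η x + w x * deriv η x) ^ 2 - w x ^ 2 * deriv η x ^ 2) measurableSet_Ioc
    (by filter_upwards [Measure.ae_ne volume b] with x hxb hx
        rw [hode x ⟨hx.1, lt_of_le_of_ne hx.2 hxb⟩]
        ring),
    ← intervalIntegral.integral_of_le hab, intervalIntegral.integral_sub,
    intervalIntegral.integral_add] at hFTC
  · linarith
  all_goals exact (by fun_prop : Continuous _).intervalIntegrable _ _

lemma sq_mul_integral_le_of_isPrincipalEigenfunction {m c v η : ℝ → ℝ} {lam s K : ℝ}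
    (hm : ContDiff ℝ 2 m) (hc : Continuous c) (hs : 0 ≤ s)
    (hv : IsPrincipalEigenfunction m c lam s v) (hη : ContDiff ℝ 1 η)
    (hη0 : 0 ≤ deriv m 0 * η 0 ^ 2) (hη1 : deriv m 1 * η 1 ^ 2 ≤ 0)
    (hK : ∀ x ∈ Icc (0:ℝ) 1,
      deriv η x ^ 2 - (s * deriv (deriv m) x + c x - lam) * η x ^ 2 ≤ K) :
    s ^ 2 * ∫ x in (0:ℝ)..1, v x ^ 2 * (deriv m x ^ 2 * η x ^ 2) ≤ K := by
  obtain ⟨hv2, -, hode, hv0, hv1, hnorm⟩ := hv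
  have hm'c := hm.continuous_deriv one_le_two
  have hm''c := hm.deriv'.continuous_deriv_one
  have hη'c := hη.continuous_deriv_one
  have hvc := hv2.continuous
  have hid := integral_potential_mul_sq_add_integral_sq_eq zero_le_one hv2
    (q := fun x => s ^ 2 * deriv m x ^ 2 + (s * deriv (deriv m) x + c x - lam))
    (by fun_prop) hη fun x hx => by linarith [hode x hx]
  have hsplit : (∫ x in (0:ℝ)..1,
        (s ^ 2 * deriv m x ^ 2 + (s * deriv (deriv m) x + c x - lam)) * v x ^ 2 * η x ^ 2)
      = s ^ 2 * (∫ x in (0:ℝ)..1, v x ^ 2 * (deriv m x ^ 2 * η x ^ 2))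
        + ∫ x in (0:ℝ)..1, (s * deriv (deriv m) x + c x - lam) * η x ^ 2 * v x ^ 2 := by
    rw [← intervalIntegral.integral_const_mul, ← intervalIntegral.integral_add
      ((by fun_prop : Continuous _).intervalIntegrable _ _)
      ((by fun_prop : Continuous _).intervalIntegrable _ _)]
    exact intervalIntegral.integral_congr fun x _ => by ring
  have hboundary : deriv v 1 * v 1 * η 1 ^ 2 - deriv v 0 * v 0 * η 0 ^ 2 ≤ 0 := by
    rw [hv0, hv1]
    nlinarith [mul_nonpos_of_nonneg_of_nonpos (mul_nonneg hs (sq_nonneg (v 1))) hη1,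
      mul_nonneg (mul_nonneg hs (sq_nonneg (v 0))) hη0]
  have hgradient : 0 ≤ ∫ x in (0:ℝ)..1, (deriv v x * η x + v x * deriv η x) ^ 2 :=
    intervalIntegral.integral_nonneg zero_le_one fun x _ => sq_nonneg _
  have hpotential : (∫ x in (0:ℝ)..1, v x ^ 2 * deriv η x ^ 2)
      - (∫ x in (0:ℝ)..1, (s * deriv (deriv m) x + c x - lam) * η x ^ 2 * v x ^ 2) ≤ K := by
    rw [← intervalIntegral.integral_sub ((by fun_prop : Continuous _).intervalIntegrable _ _)
      ((by fun_prop : Continuous _).intervalIntegrable _ _)]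
    calc _ ≤ ∫ x in (0:ℝ)..1, K * v x ^ 2 :=
          intervalIntegral.integral_mono_on zero_le_one
            ((by fun_prop : Continuous _).intervalIntegrable _ _)
            ((by fun_prop : Continuous _).intervalIntegrable _ _) fun x hx => by
              nlinarith [mul_le_mul_of_nonneg_right (hK x hx) (sq_nonneg (v x))]
      _ = K := by rw [intervalIntegral.integral_const_mul, hnorm, mul_one]
  linarith

lemma tendsto_zero_of_sq_mul_le {ι : Type*} {l : Filter ι} {s I : ι → ℝ} {A B : ℝ}
    (hs : Tendsto s l atTop) (hI : ∀ᶠ j in l, 0 ≤ I j)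
    (h : ∀ᶠ j in l, s j ^ 2 * I j ≤ s j * A + B) : Tendsto I l (𝓝 0) := by
  have hinv : Tendsto (fun j => (s j)⁻¹) l (𝓝 0) := hs.inv_tendsto_atTop
  have hbound : Tendsto (fun j => A * (s j)⁻¹ + B * (s j)⁻¹ ^ 2) l (𝓝 0) := by
    simpa using (hinv.const_mul A).add ((hinv.pow 2).const_mul B)
  refine squeeze_zero' hI ?_ hbound
  filter_upwards [h, hs.eventually_gt_atTop 0] with j hj hsj
  calc I j ≤ (s j * A + B) / s j ^ 2 := by rw [le_div_iff₀ (by positivity)]; linarith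
    _ = A * (s j)⁻¹ + B * (s j)⁻¹ ^ 2 := by field_simp

lemma tendsto_integral_sq_mul_deriv_sq_mul_sq_zero {ι : Type*} {l : Filter ι}
    {m c η : ℝ → ℝ} {s lam : ι → ℝ} {v : ι → ℝ → ℝ} {M : ℝ}
    (hm : ContDiff ℝ 2 m) (hc : Continuous c) (hs : Tendsto s l atTop)
    (hlam : ∀ᶠ j in l, lam j ≤ M)
    (hv : ∀ᶠ j in l, IsPrincipalEigenfunction m c (lam j) (s j) (v j))
    (hη : ContDiff ℝ 1 η) (hη0 : 0 ≤ deriv m 0 * η 0 ^ 2) (hη1 : deriv m 1 * η 1 ^ 2 ≤ 0) :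
    Tendsto (fun j => ∫ x in (0:ℝ)..1, v j x ^ 2 * (deriv m x ^ 2 * η x ^ 2)) l (𝓝 0) := by
  have hm''c := hm.deriv'.continuous_deriv_one
  have hη'c := hη.continuous_deriv_one
  obtain ⟨A, hA⟩ := (isCompact_Icc (a := (0:ℝ)) (b := 1)).bddAbove_image
    (f := fun x => -(deriv (deriv m) x * η x ^ 2)) (by fun_prop : Continuous _).continuousOn
  obtain ⟨B, hB⟩ := (isCompact_Icc (a := (0:ℝ)) (b := 1)).bddAbove_image
    (f := fun x => deriv η x ^ 2 - c x * η x ^ 2 + M * η x ^ 2)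
    (by fun_prop : Continuous _).continuousOn
  refine tendsto_zero_of_sq_mul_le (A := A) (B := B) hs (Eventually.of_forall fun j =>
    intervalIntegral.integral_nonneg zero_le_one fun x _ => by positivity) ?_
  filter_upwards [hlam, hv, hs.eventually_ge_atTop 0] with j hlamj hvj hsj
  refine sq_mul_integral_le_of_isPrincipalEigenfunction hm hc hsj hvj hη hη0 hη1 fun x hx => ?_
  have hAx : -(deriv (deriv m) x * η x ^ 2) ≤ A := hA (mem_image_of_mem _ hx)
  have hBx : deriv η x ^ 2 - c x * η x ^ 2 + M * η x ^ 2 ≤ B := hB (mem_image_of_mem _ hx)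
  nlinarith [mul_le_mul_of_nonneg_left hAx hsj,
    mul_le_mul_of_nonneg_right hlamj (sq_nonneg (η x))]

lemma measure_support_deriv_sq_mul_sq_inter_Icc_eq_zero {m c η : ℝ → ℝ} {w : ℝ → ℝ → ℝ}
    {μ : Measure ℝ} [IsFiniteMeasureOnCompacts μ] {sj : ℕ → ℝ}
    (hm : ContDiff ℝ 2 m) (hc : Continuous c)
    (hw : ∀ s > (0:ℝ), IsPrincipalEigenfunction m c (lambdaN m c s) s (w s))
    (hsj : Tendsto sj atTop atTop)
    (hweak : ∀ ζ : ℝ → ℝ, Continuous ζ →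
      Tendsto (fun j => ∫ x in (0:ℝ)..1, w (sj j) x ^ 2 * ζ x) atTop
        (𝓝 (∫ x in Icc (0:ℝ) 1, ζ x ∂μ)))
    (hη : ContDiff ℝ 1 η) (hη0 : 0 ≤ deriv m 0 * η 0 ^ 2) (hη1 : deriv m 1 * η 1 ^ 2 ≤ 0) :
    μ (Function.support (fun x => deriv m x ^ 2 * η x ^ 2) ∩ Icc 0 1) = 0 := by
  obtain ⟨M, hM⟩ := (isCompact_Icc (a := (0:ℝ)) (b := 1)).exists_bound_of_continuousOn
    hc.continuousOn
  have hv : ∀ᶠ j in atTop, IsPrincipalEigenfunction m c (lambdaN m c (sj j)) (sj j) (w (sj j)) :=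
    (hsj.eventually_gt_atTop 0).mono fun j hj => hw _ hj
  have hm'c := hm.continuous_deriv one_le_two
  have hζ : Continuous fun x => deriv m x ^ 2 * η x ^ 2 := by fun_prop
  have hint : ∫ x in Icc (0:ℝ) 1, deriv m x ^ 2 * η x ^ 2 ∂μ = 0 :=
    tendsto_nhds_unique (hweak _ hζ) (tendsto_integral_sq_mul_deriv_sq_mul_sq_zero hm hc hsj
      (Eventually.of_forall fun j => lambdaN_le hm.continuous hc hM _) hv hη hη0 hη1)
  simpa [hint] using (setIntegral_pos_iff_support_of_nonneg_ae
    (ae_of_all _ fun x => by positivity) (hζ.integrableOn_Icc (μ := μ) (a := 0) (b := 1))).not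

theorem measure_zero_on_nondegenerate_set_general
    (m c : ℝ → ℝ) (hm : ContDiff ℝ 2 m) (hc : Continuous c)
    (w : ℝ → ℝ → ℝ)
    (hw : ∀ s > (0:ℝ), IsPrincipalEigenfunction m c (lambdaN m c s) s (w s))
    (μ : Measure ℝ) [IsProbabilityMeasure μ]
    (sj : ℕ → ℝ) (hsj : Tendsto sj atTop atTop)
    (hweak : ∀ ζ : ℝ → ℝ, Continuous ζ →
      Tendsto (fun j => ∫ x in (0:ℝ)..1, (w (sj j) x) ^ 2 * ζ x) atTop
        (nhds (∫ x in Set.Icc (0:ℝ) 1, ζ x ∂μ))) :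
    μ {x ∈ Set.Ioo (0:ℝ) 1 | deriv m x ≠ 0} = 0 ∧
    (0 < deriv m 0 → μ {0} = 0) ∧
    (deriv m 1 < 0 → μ {1} = 0) := by
  have hnull {η : ℝ → ℝ} (hη : ContDiff ℝ 1 η) (hη0 : 0 ≤ deriv m 0 * η 0 ^ 2)
      (hη1 : deriv m 1 * η 1 ^ 2 ≤ 0) :=
    measure_support_deriv_sq_mul_sq_inter_Icc_eq_zero hm hc hw hsj hweak hη hη0 hη1
  refine ⟨measure_mono_null ?_ (hnull (η := fun x => x * (1 - x)) (by fun_prop) (by simp)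
      (by simp)),
    fun h0 => measure_mono_null ?_ (hnull (η := fun x => 1 - x) (by fun_prop)
      (by simpa using h0.le) (by simp)),
    fun h1 => measure_mono_null ?_ (hnull (η := fun x => x) (by fun_prop) (by simp)
      (by simpa using h1.le))⟩
  · rintro x ⟨⟨hx0, hx1⟩, hmx⟩
    exact ⟨mul_ne_zero (pow_ne_zero 2 hmx)
      (pow_ne_zero 2 (mul_pos hx0 (sub_pos.mpr hx1)).ne'), hx0.le, hx1.le⟩
  · rintro x rfl
    exact ⟨mul_ne_zero (pow_ne_zero 2 h0.ne') (by norm_num), le_rfl, zero_le_one⟩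
  · rintro x rfl
    exact ⟨mul_ne_zero (pow_ne_zero 2 h1.ne) (by norm_num), zero_le_one, le_rfl⟩

/-- Lemma 2.2: the weak limit measure `μ` gives no mass to
`Ω₁ = {x ∈ (0,1) : m'(x) ≠ 0} ∪ {0 if m'(0) > 0} ∪ {1 if m'(1) < 0}`. -/
theorem measure_zero_on_nondegenerate_set
    (m c : ℝ → ℝ) (hm : ContDiff ℝ 2 m) (hc : Continuous c)
    (w : ℝ → ℝ → ℝ)
    (hw : ∀ s > (0:ℝ), IsPrincipalEigenfunction m c (lambdaN m c s) s (w s))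
    (μ : Measure ℝ) [IsProbabilityMeasure μ] (hμsupp : μ (Set.Icc (0:ℝ) 1)ᶜ = 0)
    (sj : ℕ → ℝ) (hsjpos : ∀ j, 0 < sj j) (hsj : Tendsto sj atTop atTop)
    (hweak : ∀ ζ : ℝ → ℝ, Continuous ζ →
      Tendsto (fun j => ∫ x in (0:ℝ)..1, (w (sj j) x) ^ 2 * ζ x) atTop
        (nhds (∫ x in Set.Icc (0:ℝ) 1, ζ x ∂μ))) :
    μ {x ∈ Set.Ioo (0:ℝ) 1 | deriv m x ≠ 0} = 0 ∧
    (0 < deriv m 0 → μ {0} = 0) ∧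
    (deriv m 1 < 0 → μ {1} = 0) :=
  measure_zero_on_nondegenerate_set_general m c hm hc w hw μ sj hsj hweak
end

section
/- Assume 0 < a ≤ 1 and m'(x) > 0 for every x ∈ [0,a). Then w(s,·) → 0 locally uniformly in [0,a) as s → ∞; that is, for every compact set K ⊂ [0,a), sup_{x ∈ K} w(s,x) → 0 as s → ∞. -/
/-!
Write `u = w' - s m' w`, so that `(e^{-s m} w)' = e^{-s m} u`. Multiplying the equation by `w` and
integrating by parts, the boundary conditions kill the boundary terms and leave
`∫₀¹ u² = λ₁ᴺ(s) - ∫₀¹ c w² ≤ 2 max |c|`, since constant test functions give `λ₁ᴺ(s) ≤ max |c|`.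

For `x ∈ K` pick `ξ ∈ [x + d, x + 2d]` with `w(ξ)² ≤ 1/d`. Integrating `(e^{-s m} w)'` from `x`
to `ξ`, `w(x) = e^{s(m x - m ξ)} w(ξ) - ∫ₓ^ξ e^{s(m x - m t)} u(t) dt`. As `m' ≥ δ > 0` on `[x, ξ]`,
the first term is at most `e^{-sδd}/√d`; Young's inequality with weight `√s` and
`∫ₓ^ξ e^{2s(m x - m t)} dt ≤ 1/(2sδ)` bound the second by `(1/(4δ) + max |c|)/√s`.
-/

open MeasureTheory Filter Set

open Real Topology

lemma integral_exp_neg_mul_sub_le {k : ℝ} (hk : 0 < k) (x ξ : ℝ) :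
    ∫ t in x..ξ, exp (-k * (t - x)) ≤ 1 / k := by
  have hderiv : ∀ t ∈ uIcc x ξ,
      HasDerivAt (fun t => exp (-k * (t - x)) / -k) (exp (-k * (t - x))) t := by
    intro t _
    refine ((((hasDerivAt_id' t).sub_const x).const_mul (-k)).exp.div_const (-k)).congr_deriv ?_
    field_simp
  rw [intervalIntegral.integral_eq_sub_of_hasDerivAt hderiv
    (Continuous.intervalIntegrable (by fun_prop) _ _)]
  have := exp_pos (-k * (ξ - x))
  simp only [sub_self, mul_zero, exp_zero]
  rw [div_sub_div_same, div_neg, ← neg_div, neg_sub, div_le_div_iff_of_pos_right hk]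
  linarith

lemma integral_exp_two_mul_sub_le {m : ℝ → ℝ} (hm : Continuous m) {s δ x ξ : ℝ} (hs : 0 < s)
    (hδ : 0 < δ) (hxξ : x ≤ ξ) (hslope : ∀ t ∈ Icc x ξ, δ * (t - x) ≤ m t - m x) :
    ∫ t in x..ξ, exp (2 * s * (m x - m t)) ≤ 1 / (2 * s * δ) := by
  refine le_trans (intervalIntegral.integral_mono_on hxξ
    (Continuous.intervalIntegrable (by fun_prop) _ _)
    (Continuous.intervalIntegrable (by fun_prop) _ _) fun t ht => exp_le_exp.2 ?_)
    (integral_exp_neg_mul_sub_le (by positivity) x ξ)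
  nlinarith [hslope t ht]

lemma mul_le_half_mul_sq_add_sq_div {σ : ℝ} (hσ : 0 < σ) (p q : ℝ) :
    p * q ≤ σ / 2 * p ^ 2 + q ^ 2 / (2 * σ) := by
  rw [← sub_nonneg]
  have : σ / 2 * p ^ 2 + q ^ 2 / (2 * σ) - p * q = (σ * p - q) ^ 2 / (2 * σ) := by
    field_simp; ring
  rw [this]
  positivity

lemma abs_integral_exp_mul_le {m u : ℝ → ℝ} (hm : Continuous m) (hu : Continuous u)
    {s δ E x ξ : ℝ} (hs : 0 < s) (hδ : 0 < δ) (hxξ : x ≤ ξ)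
    (hslope : ∀ t ∈ Icc x ξ, δ * (t - x) ≤ m t - m x) (hE : ∫ t in x..ξ, u t ^ 2 ≤ 2 * E) :
    |∫ t in x..ξ, exp (s * (m x - m t)) * u t| ≤ (1 / (4 * δ) + E) / √s := by
  set σ := √s
  have hσ : 0 < σ := sqrt_pos.2 hs
  have hσs : σ ^ 2 = s := sq_sqrt hs.le
  have hyoung : ∀ t, |exp (s * (m x - m t)) * u t|
      ≤ σ / 2 * exp (2 * s * (m x - m t)) + u t ^ 2 / (2 * σ) := by
    intro t
    have hsq : exp (s * (m x - m t)) ^ 2 = exp (2 * s * (m x - m t)) := by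
      rw [← exp_nat_mul]; push_cast; ring_nf
    rw [abs_mul, abs_of_pos (exp_pos _), ← hsq, ← sq_abs (u t)]
    exact mul_le_half_mul_sq_add_sq_div hσ _ _
  calc |∫ t in x..ξ, exp (s * (m x - m t)) * u t|
      ≤ ∫ t in x..ξ, |exp (s * (m x - m t)) * u t| :=
        intervalIntegral.abs_integral_le_integral_abs hxξ
    _ ≤ ∫ t in x..ξ, (σ / 2 * exp (2 * s * (m x - m t)) + u t ^ 2 / (2 * σ)) :=
        intervalIntegral.integral_mono_on hxξ (Continuous.intervalIntegrable (by fun_prop) _ _)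
          (Continuous.intervalIntegrable (by fun_prop) _ _) fun t _ => hyoung t
    _ = σ / 2 * (∫ t in x..ξ, exp (2 * s * (m x - m t))) + (∫ t in x..ξ, u t ^ 2) / (2 * σ) := by
        rw [intervalIntegral.integral_add (Continuous.intervalIntegrable (by fun_prop) _ _)
          (Continuous.intervalIntegrable (by fun_prop) _ _), intervalIntegral.integral_const_mul,
          intervalIntegral.integral_div]
    _ ≤ σ / 2 * (1 / (2 * s * δ)) + 2 * E / (2 * σ) := by
        gcongr
        exact integral_exp_two_mul_sub_le hm hs hδ hxξ hslope
    _ = (1 / (4 * δ) + E) / σ := by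
        rw [← hσs]; field_simp; ring

lemma eq_exp_mul_sub_integral {m w : ℝ → ℝ} (hm : ContDiff ℝ 1 m) (hw : ContDiff ℝ 1 w)
    (s x ξ : ℝ) :
    w x = exp (s * (m x - m ξ)) * w ξ
      - ∫ t in x..ξ, exp (s * (m x - m t)) * (deriv w t - s * deriv m t * w t) := by
  have hderiv : ∀ t ∈ uIcc x ξ, HasDerivAt (fun t => exp (s * (m x - m t)) * w t)
      (exp (s * (m x - m t)) * (deriv w t - s * deriv m t * w t)) t := by
    intro t _
    have hmt := ((hm.differentiable one_ne_zero t).hasDerivAt.const_sub (m x)).const_mul s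
    refine (hmt.exp.mul (hw.differentiable one_ne_zero t).hasDerivAt).congr_deriv ?_
    ring
  rw [intervalIntegral.integral_eq_sub_of_hasDerivAt hderiv
    (Continuous.intervalIntegrable (by fun_prop) _ _)]
  simp

lemma integral_sq_deriv_sub_mul_eq {m c v : ℝ → ℝ} {s lam : ℝ} (hm : ContDiff ℝ 2 m)
    (hc : Continuous c) (hv : ContDiff ℝ 2 v)
    (hode : ∀ x ∈ Ioo (0:ℝ) 1, -(deriv (deriv v) x)
      + (s ^ 2 * (deriv m x) ^ 2 + s * deriv (deriv m) x + c x) * v x = lam * v x)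
    (h0 : deriv v 0 = s * v 0 * deriv m 0) (h1 : deriv v 1 = s * v 1 * deriv m 1) :
    ∫ x in (0:ℝ)..1, (deriv v x - s * deriv m x * v x) ^ 2
      = lam * (∫ x in (0:ℝ)..1, v x ^ 2) - ∫ x in (0:ℝ)..1, c x * v x ^ 2 := by
  have hm' : ContDiff ℝ 1 (deriv m) := hm.deriv'
  have hv' : ContDiff ℝ 1 (deriv v) := hv.deriv'
  have hdv := fun x => (hv.differentiable two_ne_zero x).hasDerivAt
  have hddv := fun x => (hv'.differentiable one_ne_zero x).hasDerivAt
  have hddm := fun x => (hm'.differentiable one_ne_zero x).hasDerivAt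
  have hderiv : ∀ x ∈ Ioo (0:ℝ) 1,
      HasDerivAt (fun x => deriv v x * v x - s * deriv m x * v x ^ 2)
        ((deriv v x - s * deriv m x * v x) ^ 2 + (c x * v x ^ 2 - lam * v x ^ 2)) x := by
    intro x hx
    refine (((hddv x).mul (hdv x)).sub
      (((hddm x).const_mul s).mul ((hdv x).pow 2))).congr_deriv ?_
    simp only [Pi.pow_apply]
    linear_combination (-v x) * hode x hx
  have key : ∫ x in (0:ℝ)..1,
      ((deriv v x - s * deriv m x * v x) ^ 2 + (c x * v x ^ 2 - lam * v x ^ 2)) = 0 := by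
    rw [intervalIntegral.integral_eq_sub_of_hasDerivAt_of_le zero_le_one
      (by fun_prop : Continuous _).continuousOn hderiv
      (Continuous.intervalIntegrable (by fun_prop) _ _), h0, h1]
    ring
  rw [intervalIntegral.integral_add (Continuous.intervalIntegrable (by fun_prop) _ _)
    (Continuous.intervalIntegrable (by fun_prop) _ _),
    intervalIntegral.integral_sub (Continuous.intervalIntegrable (by fun_prop) _ _)
    (Continuous.intervalIntegrable (by fun_prop) _ _), intervalIntegral.integral_const_mul] at key
  linear_combination key

lemma lambdaN_le_of_abs_le {m c : ℝ → ℝ} (hm : Continuous m) (hc : Continuous c) {C : ℝ}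
    (hC : ∀ x ∈ Icc (0:ℝ) 1, |c x| ≤ C) (s : ℝ) : lambdaN m c s ≤ C := by
  unfold lambdaN
  have hI : 0 < ∫ x in (0:ℝ)..1, exp (2 * s * m x) :=
    intervalIntegral.intervalIntegral_pos_of_pos_on
      (Continuous.intervalIntegrable (by fun_prop) _ _) (fun x _ => exp_pos _) one_pos
  have hcC : ∀ x ∈ Icc (0:ℝ) 1, -C ≤ c x ∧ c x ≤ C := fun x hx => abs_le.1 (hC x hx)
  -- the Rayleigh quotients are bounded below by `-C`, and a constant test function gives one `≤ C`
  refine le_trans (csInf_le ⟨-C, ?_⟩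
    ⟨fun _ => (√(∫ x in (0:ℝ)..1, exp (2 * s * m x)))⁻¹, contDiff_const, ?_, rfl⟩) ?_
  · rintro l ⟨φ, hφ, hnorm, rfl⟩
    have hφ' : Continuous (deriv φ) := hφ.continuous_deriv le_rfl
    have hφc : Continuous φ := hφ.continuous
    calc -C = ∫ x in (0:ℝ)..1, -C * (exp (2 * s * m x) * φ x ^ 2) := by
          rw [intervalIntegral.integral_const_mul, hnorm, mul_one]
      _ ≤ ∫ x in (0:ℝ)..1, exp (2 * s * m x) * (deriv φ x ^ 2 + c x * φ x ^ 2) := by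
          refine intervalIntegral.integral_mono_on zero_le_one
            (Continuous.intervalIntegrable (by fun_prop) _ _)
            (Continuous.intervalIntegrable (by fun_prop) _ _) fun x hx => ?_
          have hρ := (exp_pos (2 * s * m x)).le
          nlinarith [mul_nonneg hρ (sq_nonneg (deriv φ x)),
            mul_le_mul_of_nonneg_right (hcC x hx).1 (mul_nonneg hρ (sq_nonneg (φ x)))]
  · simp only [inv_pow, sq_sqrt hI.le, ← div_eq_mul_inv]
    rw [intervalIntegral.integral_div, div_self hI.ne']
  · simp only [deriv_const, inv_pow, sq_sqrt hI.le]
    calc ∫ x in (0:ℝ)..1,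
          exp (2 * s * m x) * (0 ^ 2 + c x * (∫ x in (0:ℝ)..1, exp (2 * s * m x))⁻¹)
        = (∫ x in (0:ℝ)..1, exp (2 * s * m x) * c x) / ∫ x in (0:ℝ)..1, exp (2 * s * m x) := by
          rw [← intervalIntegral.integral_div]
          congr 1 with x
          ring
      _ ≤ (∫ x in (0:ℝ)..1, C * exp (2 * s * m x)) / ∫ x in (0:ℝ)..1, exp (2 * s * m x) := by
          gcongr
          refine intervalIntegral.integral_mono_on zero_le_one
            (Continuous.intervalIntegrable (by fun_prop) _ _)
            (Continuous.intervalIntegrable (by fun_prop) _ _) fun x hx => ?_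
          rw [mul_comm C]
          exact mul_le_mul_of_nonneg_left (hcC x hx).2 (exp_pos _).le
      _ = C := by
          rw [intervalIntegral.integral_const_mul, mul_div_assoc, div_self hI.ne', mul_one]

lemma exists_mem_Icc_sq_mul_le_integral {f : ℝ → ℝ} (hf : Continuous f) {a b : ℝ} (hab : a ≤ b) :
    ∃ ξ ∈ Icc a b, f ξ ^ 2 * (b - a) ≤ ∫ t in a..b, f t ^ 2 := by
  obtain ⟨ξ, hξ, hmin⟩ := isCompact_Icc.exists_isMinOn (nonempty_Icc.2 hab)
    (hf.pow 2).continuousOn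
  refine ⟨ξ, hξ, ?_⟩
  calc f ξ ^ 2 * (b - a) = ∫ _ in a..b, f ξ ^ 2 := by simp [mul_comm]
    _ ≤ ∫ t in a..b, f t ^ 2 := intervalIntegral.integral_mono_on hab intervalIntegrable_const
        ((hf.pow 2).intervalIntegrable a b) fun t ht => hmin ht

namespace IsPrincipalEigenfunction

variable {m c v : ℝ → ℝ} {s C : ℝ}

lemma integral_sq_deriv_sub_mul_le (hm : ContDiff ℝ 2 m) (hc : Continuous c)
    (hC : ∀ x ∈ Icc (0:ℝ) 1, |c x| ≤ C) (hv : IsPrincipalEigenfunction m c (lambdaN m c s) s v) :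
    ∫ x in (0:ℝ)..1, (deriv v x - s * deriv m x * v x) ^ 2 ≤ 2 * C := by
  obtain ⟨hv2, -, hode, h0, h1, hnorm⟩ := hv
  have hcv : -C ≤ ∫ x in (0:ℝ)..1, c x * v x ^ 2 := by
    calc -C = ∫ x in (0:ℝ)..1, -C * v x ^ 2 := by
          rw [intervalIntegral.integral_const_mul, hnorm, mul_one]
      _ ≤ ∫ x in (0:ℝ)..1, c x * v x ^ 2 :=
          intervalIntegral.integral_mono_on zero_le_one
            (Continuous.intervalIntegrable (by fun_prop) _ _)
            (Continuous.intervalIntegrable (by fun_prop) _ _) fun x hx =>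
            mul_le_mul_of_nonneg_right (abs_le.1 (hC x hx)).1 (sq_nonneg _)
  rw [integral_sq_deriv_sub_mul_eq hm hc hv2 hode h0 h1, hnorm, mul_one]
  linarith [lambdaN_le_of_abs_le hm.continuous hc hC s]

lemma abs_le_exp_div_sqrt_add_div_sqrt (hm : ContDiff ℝ 2 m) (hc : Continuous c)
    (hC : ∀ x ∈ Icc (0:ℝ) 1, |c x| ≤ C) (hv : IsPrincipalEigenfunction m c (lambdaN m c s) s v)
    (hs : 0 < s) {δ d x : ℝ} (hδ : 0 < δ) (hd : 0 < d) (hx : 0 ≤ x) (hx1 : x + 2 * d ≤ 1)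
    (hm' : ∀ t ∈ Icc x (x + 2 * d), δ ≤ deriv m t) :
    |v x| ≤ exp (-(s * δ * d)) / √d + (1 / (4 * δ) + C) / √s := by
  have hv2 : ContDiff ℝ 2 v := hv.1
  have hnorm : ∫ t in (0:ℝ)..1, v t ^ 2 = 1 := hv.2.2.2.2.2
  have hv' : Continuous (deriv v) := hv2.continuous_deriv one_le_two
  have hm'c : Continuous (deriv m) := hm.continuous_deriv one_le_two
  obtain ⟨ξ, hξ, hvξ⟩ :=
    exists_mem_Icc_sq_mul_le_integral hv2.continuous (by linarith : x + d ≤ x + 2 * d)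
  have hvξ : |v ξ| ≤ 1 / √d := by
    rw [one_div, ← sqrt_inv, ← one_div]
    refine abs_le_sqrt ((le_div_iff₀ hd).2 ?_)
    calc v ξ ^ 2 * d = v ξ ^ 2 * (x + 2 * d - (x + d)) := by ring
      _ ≤ _ := hvξ
      _ ≤ ∫ t in (0:ℝ)..1, v t ^ 2 :=
          intervalIntegral.integral_mono_interval (by linarith) (by linarith) hx1
            (Eventually.of_forall fun _ => sq_nonneg _)
            (Continuous.intervalIntegrable (by fun_prop) _ _)
      _ = 1 := hnorm
  have hslope : ∀ t ∈ Icc x ξ, δ * (t - x) ≤ m t - m x := fun t ht =>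
    (convex_Icc x (x + 2 * d)).mul_sub_le_image_sub_of_le_deriv hm.continuous.continuousOn
      (hm.differentiable two_ne_zero).differentiableOn
      (fun y hy => hm' y (interior_subset hy)) x ⟨le_rfl, by linarith⟩ t
      ⟨ht.1, ht.2.trans hξ.2⟩ ht.1
  have hxξ : x ≤ ξ := by linarith [hξ.1]
  have hfirst : |exp (s * (m x - m ξ)) * v ξ| ≤ exp (-(s * δ * d)) / √d := by
    rw [abs_mul, abs_of_pos (exp_pos _), div_eq_mul_one_div]
    refine mul_le_mul (exp_le_exp.2 ?_) hvξ (abs_nonneg _) (exp_pos _).le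
    have hδd : δ * d ≤ m ξ - m x := le_trans
      (mul_le_mul_of_nonneg_left (by linarith [hξ.1]) hδ.le) (hslope ξ ⟨hxξ, le_rfl⟩)
    nlinarith
  have hsecond := abs_integral_exp_mul_le hm.continuous (by fun_prop : Continuous
      fun t => deriv v t - s * deriv m t * v t) hs hδ hxξ hslope
    (le_trans (intervalIntegral.integral_mono_interval hx hxξ (by linarith [hξ.2])
      (Eventually.of_forall fun _ => sq_nonneg _)
      (Continuous.intervalIntegrable (by fun_prop) _ _)) (hv.integral_sq_deriv_sub_mul_le hm hc hC))
  rw [eq_exp_mul_sub_integral (hm.of_le one_le_two) (hv2.of_le one_le_two) s x ξ]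
  exact (abs_sub _ _).trans (add_le_add hfirst hsecond)

end IsPrincipalEigenfunction

lemma tendstoUniformlyOn_zero_of_abs_le {ι α : Type*} {l : Filter ι} {f : ι → α → ℝ} {g : ι → ℝ}
    {K : Set α} (hg : Tendsto g l (𝓝 0)) (hfg : ∀ᶠ i in l, ∀ x ∈ K, |f i x| ≤ g i) :
    TendstoUniformlyOn f (fun _ => 0) l K := by
  rw [Metric.tendstoUniformlyOn_iff]
  intro ε hε
  filter_upwards [hfg, hg.eventually_lt_const hε] with i hi hgi x hx
  rw [dist_zero_left, norm_eq_abs]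
  exact (hi x hx).trans_lt hgi

lemma tendsto_exp_neg_mul_div_add_div_sqrt {δ d : ℝ} (hδ : 0 < δ) (hd : 0 < d) (A : ℝ) :
    Tendsto (fun s => exp (-(s * δ * d)) / √d + A / √s) atTop (𝓝 0) := by
  have hexp : Tendsto (fun s => exp (-(s * δ * d))) atTop (𝓝 0) :=
    tendsto_exp_atBot.comp (tendsto_neg_atTop_atBot.comp
      ((tendsto_id.atTop_mul_const hδ).atTop_mul_const hd))
  simpa [div_eq_mul_inv] using
    (hexp.div_const √d).add (tendsto_sqrt_atTop.inv_tendsto_atTop.const_mul A)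

theorem eigenfunction_tendsto_zero_locally_uniformly_of_deriv_pos_left_general
    (m c : ℝ → ℝ) (hm : ContDiff ℝ 2 m) (hc : Continuous c)
    (w : ℝ → ℝ → ℝ)
    (hw : ∀ s > (0:ℝ), IsPrincipalEigenfunction m c (lambdaN m c s) s (w s))
    (a : ℝ) (ha1 : a ≤ 1)
    (hm' : ∀ x ∈ Set.Ico (0:ℝ) a, 0 < deriv m x) :
    ∀ K : Set ℝ, IsCompact K → K ⊆ Set.Ico (0:ℝ) a →
      TendstoUniformlyOn (fun s x => w s x) (fun _ => (0:ℝ)) Filter.atTop K := by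
  intro K hK hKa
  rcases K.eq_empty_or_nonempty with rfl | hKne
  · exact tendstoUniformlyOn_empty
  obtain ⟨κ, hκK, hκ⟩ := hK.exists_isGreatest hKne
  obtain ⟨hκ0, hκa⟩ := hKa hκK
  obtain ⟨d, hd, hκd⟩ : ∃ d, 0 < d ∧ κ + 2 * d < a :=
    ⟨(a - κ) / 3, div_pos (by linarith) three_pos, by linarith⟩
  obtain ⟨t₀, ht₀, hmin⟩ := isCompact_Icc.exists_isMinOn (nonempty_Icc.2 (by linarith))
    (hm.continuous_deriv one_le_two).continuousOn (s := Icc 0 (κ + 2 * d))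
  have hδ : 0 < deriv m t₀ := hm' t₀ ⟨ht₀.1, by linarith [ht₀.2]⟩
  obtain ⟨C, hC⟩ := isCompact_Icc.exists_bound_of_continuousOn hc.continuousOn (s := Icc 0 1)
  refine tendstoUniformlyOn_zero_of_abs_le
    (tendsto_exp_neg_mul_div_add_div_sqrt hδ hd (1 / (4 * deriv m t₀) + C)) ?_
  filter_upwards [eventually_gt_atTop 0] with s hs x hx
  have hxκ : x ≤ κ := hκ hx
  exact (hw s hs).abs_le_exp_div_sqrt_add_div_sqrt hm hc hC hs hδ hd (hKa hx).1 (by linarith)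
    fun t ht => hmin ⟨(hKa hx).1.trans ht.1, ht.2.trans (by linarith)⟩

/-- Lemma 2.3 (ii): if `m' > 0` on `[0,a)`, then the principal eigenfunctions
`w(s,·)` tend to `0` locally uniformly in `[0,a)` as `s → ∞`. -/
theorem eigenfunction_tendsto_zero_locally_uniformly_of_deriv_pos_left
    (m c : ℝ → ℝ) (hm : ContDiff ℝ 2 m) (hc : Continuous c)
    (w : ℝ → ℝ → ℝ)
    (hw : ∀ s > (0:ℝ), IsPrincipalEigenfunction m c (lambdaN m c s) s (w s))
    (a : ℝ) (ha : 0 < a) (ha1 : a ≤ 1)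
    (hm' : ∀ x ∈ Set.Ico (0:ℝ) a, 0 < deriv m x) :
    ∀ K : Set ℝ, IsCompact K → K ⊆ Set.Ico (0:ℝ) a →
      TendstoUniformlyOn (fun s x => w s x) (fun _ => (0:ℝ)) Filter.atTop K :=
  eigenfunction_tendsto_zero_locally_uniformly_of_deriv_pos_left_general m c hm hc w hw a ha1 hm'
end

section
/- Assume [a₁,a₂] ⊆ [0,1] with a₁ < a₂, and that m is strictly increasing on [a₁,a₂] or m is strictly decreasing on [a₁,a₂]. Then μ((a₁,a₂)) = 0. -/
open MeasureTheory Filter Set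

/-!
The flux `J = w w' - s m' w²` of an eigenfunction vanishes at `0` and `1`, and the equation gives
`J' = (w' - s m' w)² + (c - λ) w² ≥ -M w²`, where `M` bounds `|c - λ|` uniformly in `s` because the
Rayleigh quotient puts `λ` in `[min c, max c]`; hence `|J| ≤ M`.
As `(e^{-2sm} w²)' = 2 e^{-2sm} J`, on a stretch where `m` increases `w(x)²` is at most
`e^{-2s(m y - m x)} w(y)² + 2M ∫ₓʸ e^{-2s(m t - m x)} dt` for a point `y > x` at which the
normalisation bounds `w(y)²`; the first term is exponentially small and the integral is at most
`η + e^{-2sd}` for any step `η`, where `d > 0` is the least increase of `m` over a step `η`.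
So `w_s² → 0` uniformly on compact subintervals of `(a₁, a₂)` (reflect through `x ↦ 1 - x` when
`m` decreases), and testing the weak convergence against a bump function shows that `μ` gives
them no mass.
-/

open Real Topology

noncomputable def flux (m : ℝ → ℝ) (s : ℝ) (v : ℝ → ℝ) (t : ℝ) : ℝ :=
  v t * deriv v t - s * deriv m t * v t ^ 2

section PrincipalEigenvalue

variable {m c : ℝ → ℝ} {s cmin cmax : ℝ}

theorem le_integral_exp_mul_energy (hm : Continuous m) (hc : Continuous c)
    (hmin : ∀ x ∈ Icc (0:ℝ) 1, cmin ≤ c x) {φ : ℝ → ℝ} (hφ : ContDiff ℝ 1 φ)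
    (hnorm : ∫ x in (0:ℝ)..1, exp (2 * s * m x) * φ x ^ 2 = 1) :
    cmin ≤ ∫ x in (0:ℝ)..1, exp (2 * s * m x) * (deriv φ x ^ 2 + c x * φ x ^ 2) := by
  have hφ' := hφ.continuous_deriv le_rfl
  have hφc := hφ.continuous
  calc cmin = ∫ x in (0:ℝ)..1, cmin * (exp (2 * s * m x) * φ x ^ 2) := by
        rw [intervalIntegral.integral_const_mul, hnorm, mul_one]
    _ ≤ _ := intervalIntegral.integral_mono_on zero_le_one
        (by apply Continuous.intervalIntegrable; fun_prop)
        (by apply Continuous.intervalIntegrable; fun_prop) fun x hx => by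
          have := mul_le_mul_of_nonneg_left (hmin x hx) (exp_pos (2 * s * m x)).le
          nlinarith [sq_nonneg (deriv φ x), sq_nonneg (φ x), exp_pos (2 * s * m x)]

theorem lambdaN_mem_Icc (hm : Continuous m) (hc : Continuous c)
    (hmin : ∀ x ∈ Icc (0:ℝ) 1, cmin ≤ c x) (hmax : ∀ x ∈ Icc (0:ℝ) 1, c x ≤ cmax) :
    lambdaN m c s ∈ Icc cmin cmax := by
  set I := ∫ x in (0:ℝ)..1, exp (2 * s * m x)
  have hI : 0 < I := intervalIntegral.intervalIntegral_pos_of_pos_on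
    (by apply Continuous.intervalIntegrable; fun_prop) (fun x _ => exp_pos _) one_pos
  set K := √I⁻¹
  have hK : I * K ^ 2 = 1 := by rw [sq_sqrt (inv_nonneg.2 hI.le), mul_inv_cancel₀ hI.ne']
  have hmem : ∫ x in (0:ℝ)..1, exp (2 * s * m x) * (deriv (fun _ => K) x ^ 2 + c x * K ^ 2) ∈
      {l : ℝ | ∃ φ : ℝ → ℝ, ContDiff ℝ 1 φ ∧
        (∫ x in (0:ℝ)..1, exp (2 * s * m x) * (φ x) ^ 2) = 1 ∧
        l = ∫ x in (0:ℝ)..1, exp (2 * s * m x) * ((deriv φ x) ^ 2 + c x * (φ x) ^ 2)} :=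
    ⟨fun _ => K, contDiff_const, by rw [intervalIntegral.integral_mul_const, hK], rfl⟩
  have hupper : ∫ x in (0:ℝ)..1, exp (2 * s * m x) * (deriv (fun _ => K) x ^ 2 + c x * K ^ 2)
      ≤ cmax := by
    simp only [deriv_const']
    calc _ ≤ ∫ x in (0:ℝ)..1, cmax * K ^ 2 * exp (2 * s * m x) :=
          intervalIntegral.integral_mono_on zero_le_one
            (by apply Continuous.intervalIntegrable; fun_prop)
            (by apply Continuous.intervalIntegrable; fun_prop) fun x hx => by
              have := mul_le_mul_of_nonneg_right (hmax x hx) (sq_nonneg K)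
              nlinarith [exp_pos (2 * s * m x)]
      _ = cmax := by rw [intervalIntegral.integral_const_mul]; linear_combination cmax * hK
  refine ⟨le_csInf ⟨_, hmem⟩ ?_, (csInf_le ⟨cmin, ?_⟩ hmem).trans hupper⟩ <;>
    exact fun l ⟨φ, hφ, hnorm, hl⟩ => hl ▸ le_integral_exp_mul_energy hm hc hmin hφ hnorm

end PrincipalEigenvalue

section Flux

variable {m c v : ℝ → ℝ} {s lam M : ℝ}

theorem integral_sq_le_one (hv : Continuous v) (hnorm : ∫ t in (0:ℝ)..1, v t ^ 2 = 1)
    {a b : ℝ} (ha : 0 ≤ a) (hab : a ≤ b) (hb : b ≤ 1) : ∫ t in a..b, v t ^ 2 ≤ 1 :=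
  hnorm ▸ intervalIntegral.integral_mono_interval ha hab hb
    (ae_of_all _ fun t => sq_nonneg (v t)) ((hv.pow 2).intervalIntegrable _ _)

theorem hasDerivAt_flux (hv : ContDiff ℝ 2 v) (hm : ContDiff ℝ 2 m) (t : ℝ) :
    HasDerivAt (flux m s v) (deriv v t ^ 2 + v t * deriv (deriv v) t
      - s * (deriv (deriv m) t * v t ^ 2 + deriv m t * (2 * v t * deriv v t))) t := by
  have hv₁ := (hv.differentiable two_ne_zero t).hasDerivAt
  have hv₂ := (hv.differentiable_deriv_two t).hasDerivAt
  have hm₂ := (hm.differentiable_deriv_two t).hasDerivAt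
  exact ((hv₁.fun_mul hv₂).fun_sub ((hm₂.const_mul s).fun_mul (hv₁.fun_pow 2))).congr_deriv
    (by push_cast; ring)

theorem abs_flux_le_of_isPrincipalEigenfunction (hm : ContDiff ℝ 2 m)
    (hv : IsPrincipalEigenfunction m c lam s v) (hM : ∀ x ∈ Icc (0:ℝ) 1, |c x - lam| ≤ M)
    {x : ℝ} (hx : x ∈ Icc (0:ℝ) 1) : |flux m s v x| ≤ M := by
  obtain ⟨hv₂, -, hode, hv'0, hv'1, hnorm⟩ := hv
  have hvc := hv₂.continuous
  have hM₀ : 0 ≤ M := (abs_nonneg _).trans (hM 0 (left_mem_Icc.2 zero_le_one))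
  have hincr : ∀ a b, 0 ≤ a → a ≤ b → b ≤ 1 → -M ≤ flux m s v b - flux m s v a := by
    intro a b ha hab hb
    calc -M ≤ ∫ t in a..b, -(M * v t ^ 2) := by
          rw [intervalIntegral.integral_neg, intervalIntegral.integral_const_mul]
          nlinarith [integral_sq_le_one hvc hnorm ha hab hb]
      _ ≤ _ := intervalIntegral.integral_le_sub_of_hasDeriv_right_of_le hab
          (HasDerivAt.continuousOn fun t _ => hasDerivAt_flux hv₂ hm t)
          (fun t _ => (hasDerivAt_flux hv₂ hm t).hasDerivWithinAt)
          (by apply Continuous.integrableOn_Icc; fun_prop) fun t ht => by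
            have ht₀₁ : t ∈ Ioo (0:ℝ) 1 := ⟨ha.trans_lt ht.1, ht.2.trans_le hb⟩
            have hv'' : deriv (deriv v) t
                = (s ^ 2 * deriv m t ^ 2 + s * deriv (deriv m) t + c t - lam) * v t := by
              linarith [hode t ht₀₁]
            have hc := (abs_le.1 (hM t (Ioo_subset_Icc_self ht₀₁))).1
            rw [hv'']
            nlinarith [sq_nonneg (deriv v t - s * deriv m t * v t),
              mul_nonneg (neg_le_iff_add_nonneg.1 hc) (sq_nonneg (v t))]
  have h0 : flux m s v 0 = 0 := by rw [flux, hv'0]; ring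
  have h1 : flux m s v 1 = 0 := by rw [flux, hv'1]; ring
  have := hincr 0 x le_rfl hx.1 hx.2
  have := hincr x 1 hx.1 hx.2 le_rfl
  exact abs_le.2 ⟨by linarith, by linarith⟩

theorem flux_comp_one_sub (m : ℝ → ℝ) (s : ℝ) (v : ℝ → ℝ) (t : ℝ) :
    flux (fun t => m (1 - t)) s (fun t => v (1 - t)) t = -flux m s v (1 - t) := by
  simp only [flux, deriv_comp_const_sub]
  ring

end Flux

section Concentration

variable {m v : ℝ → ℝ} {s M : ℝ}

theorem sq_le_exp_mul_sq_add_integral (hv : Differentiable ℝ v) (hm : Differentiable ℝ m)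
    {x y : ℝ} (hxy : x ≤ y) (hflux : ∀ t ∈ Ioo x y, |flux m s v t| ≤ M) :
    v x ^ 2 ≤ exp (2 * s * (m x - m y)) * v y ^ 2
      + 2 * M * ∫ t in x..y, exp (2 * s * (m x - m t)) := by
  have hg : ∀ t, HasDerivAt (fun t => exp (2 * s * (m x - m t)) * v t ^ 2)
      (2 * exp (2 * s * (m x - m t)) * flux m s v t) t := fun t =>
    ((((hm t).hasDerivAt.const_sub (m x)).const_mul (2 * s)).exp.fun_mul
      ((hv t).hasDerivAt.fun_pow 2)).congr_deriv (by rw [flux]; push_cast; ring)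
  have := intervalIntegral.integral_le_sub_of_hasDeriv_right_of_le hxy
    (HasDerivAt.continuousOn fun t _ => hg t) (fun t _ => (hg t).hasDerivWithinAt)
    (by have := hm.continuous; apply Continuous.integrableOn_Icc; fun_prop)
    (φ := fun t => -(2 * M * exp (2 * s * (m x - m t)))) fun t ht => by
      have := neg_abs_le (flux m s v t)
      nlinarith [hflux t ht, exp_pos (2 * s * (m x - m t))]
  rw [intervalIntegral.integral_neg, intervalIntegral.integral_const_mul] at this
  simp only [sub_self, mul_zero, exp_zero, one_mul] at this
  linarith

theorem integral_exp_mul_sub_le (hs : 0 ≤ s) (hm : Continuous m) {x y η d : ℝ}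
    (hmono : MonotoneOn m (Icc x y)) (hη : 0 ≤ η) (hxy : x + η ≤ y) (hyx : y - x ≤ 1)
    (hd : d ≤ m (x + η) - m x) :
    ∫ t in x..y, exp (2 * s * (m x - m t)) ≤ η + exp (-(2 * s * d)) := by
  have hint : ∀ a b, IntervalIntegrable (fun t => exp (2 * s * (m x - m t))) volume a b :=
    fun a b => by apply Continuous.intervalIntegrable; fun_prop
  rw [← intervalIntegral.integral_add_adjacent_intervals (hint x (x + η)) (hint _ y)]
  have hnear : ∫ t in x..x + η, exp (2 * s * (m x - m t)) ≤ ∫ _ in x..x + η, (1 : ℝ) :=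
    intervalIntegral.integral_mono_on (by linarith) (hint _ _) intervalIntegrable_const
      fun t ht => exp_le_one_iff.2 <| mul_nonpos_of_nonneg_of_nonpos (by positivity) <|
        sub_nonpos.2 <| hmono ⟨le_rfl, by linarith⟩ ⟨ht.1, by linarith [ht.2]⟩ ht.1
  have hfar : ∫ t in x + η..y, exp (2 * s * (m x - m t)) ≤ ∫ _ in x + η..y, exp (-(2 * s * d)) :=
    intervalIntegral.integral_mono_on hxy (hint _ _) intervalIntegrable_const fun t ht => by
      have := hmono ⟨by linarith, hxy⟩ ⟨by linarith [ht.1], ht.2⟩ ht.1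
      exact exp_le_exp.2 (by nlinarith)
  simp only [intervalIntegral.integral_const, smul_eq_mul, mul_one] at hnear hfar
  nlinarith [exp_pos (-(2 * s * d))]

theorem exists_mem_Icc_sq_le (hv : Continuous v) (hnorm : ∫ t in (0:ℝ)..1, v t ^ 2 = 1)
    {γ δ : ℝ} (hγ : 0 ≤ γ) (hγδ : γ < δ) (hδ : δ ≤ 1) :
    ∃ y ∈ Icc γ δ, v y ^ 2 ≤ (δ - γ)⁻¹ := by
  obtain ⟨y, hy, hvy⟩ :=
    exists_eq_interval_average (f := fun t => v t ^ 2) hγδ.ne (hv.pow 2).continuousOn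
  rw [uIoo_of_le hγδ.le] at hy
  refine ⟨y, Ioo_subset_Icc_self hy, ?_⟩
  rw [hvy, interval_average_eq, smul_eq_mul]
  calc (δ - γ)⁻¹ * ∫ t in γ..δ, v t ^ 2 ≤ (δ - γ)⁻¹ * 1 := by
        gcongr
        exact integral_sq_le_one hv hnorm hγ hγδ.le hδ
    _ = (δ - γ)⁻¹ := mul_one _

end Concentration

section Decay

variable {m : ℝ → ℝ} {M a b : ℝ}

theorem sq_le_of_monotoneOn {v : ℝ → ℝ} {s x β γ δ η d : ℝ} (hv : Differentiable ℝ v)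
    (hm : Differentiable ℝ m) (hflux : ∀ t ∈ Icc (0:ℝ) 1, |flux m s v t| ≤ M)
    (hnorm : ∫ t in (0:ℝ)..1, v t ^ 2 = 1) (hs : 0 ≤ s) (hη : 0 ≤ η) (hx : 0 ≤ x)
    (hxβ : x ≤ β) (hβγ : β + η ≤ γ) (hγδ : γ < δ) (hδ : δ ≤ 1)
    (hmono : MonotoneOn m (Icc x δ)) (hd : d ≤ m (x + η) - m x) :
    v x ^ 2 ≤ exp (-(2 * s * (m γ - m β))) / (δ - γ) + 2 * M * (η + exp (-(2 * s * d))) := by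
  obtain ⟨y, hy, hvy⟩ := exists_mem_Icc_sq_le hv.continuous hnorm (by linarith) hγδ hδ
  have hM : 0 ≤ M := (abs_nonneg _).trans (hflux 0 (left_mem_Icc.2 zero_le_one))
  have hβ : m x ≤ m β := hmono ⟨le_rfl, by linarith⟩ ⟨hxβ, by linarith⟩ hxβ
  have hγ : m γ ≤ m y := hmono ⟨by linarith, hγδ.le⟩ ⟨by linarith [hy.1], hy.2⟩ hy.1
  have hint := integral_exp_mul_sub_le hs hm.continuous (hmono.mono (Icc_subset_Icc le_rfl hy.2))
    hη (by linarith [hy.1]) (by linarith [hy.2]) hd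
  calc v x ^ 2 ≤ exp (2 * s * (m x - m y)) * v y ^ 2
        + 2 * M * ∫ t in x..y, exp (2 * s * (m x - m t)) :=
        sq_le_exp_mul_sq_add_integral hv hm (by linarith [hy.1]) fun t ht =>
          hflux t ⟨by linarith [ht.1], by linarith [ht.2, hy.2]⟩
    _ ≤ exp (-(2 * s * (m γ - m β))) * (δ - γ)⁻¹ + 2 * M * (η + exp (-(2 * s * d))) := by
        gcongr
        nlinarith
    _ = _ := by rw [div_eq_mul_inv]

theorem tendsto_exp_neg_mul {s : ℕ → ℝ} (hs : Tendsto s atTop atTop) {d : ℝ} (hd : 0 < d) :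
    Tendsto (fun j => exp (-(2 * s j * d))) atTop (𝓝 0) :=
  tendsto_exp_neg_atTop_nhds_zero.comp ((hs.const_mul_atTop two_pos).atTop_mul_const hd)

variable {v : ℕ → ℝ → ℝ} {s : ℕ → ℝ}

theorem tendstoUniformlyOn_sq_of_strictMonoOn (hv : ∀ j, Differentiable ℝ (v j))
    (hm : Differentiable ℝ m) (hflux : ∀ j, ∀ t ∈ Icc (0:ℝ) 1, |flux m (s j) (v j) t| ≤ M)
    (hnorm : ∀ j, ∫ t in (0:ℝ)..1, v j t ^ 2 = 1) (hs : Tendsto s atTop atTop)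
    (hmono : StrictMonoOn m (Icc a b)) (ha : 0 ≤ a) (hb : b ≤ 1) {β : ℝ} (hβ : β < b) :
    TendstoUniformlyOn (fun j x => v j x ^ 2) 0 atTop (Icc a β) := by
  rcases (Icc a β).eq_empty_or_nonempty with hempty | hne
  · exact hempty ▸ tendstoUniformlyOn_empty
  have hM : 0 ≤ M := (abs_nonneg _).trans (hflux 0 0 (left_mem_Icc.2 zero_le_one))
  rw [Metric.tendstoUniformlyOn_iff]
  intro ε hε
  obtain ⟨γ, hβγ, hγb⟩ := exists_between hβ
  obtain ⟨η, hη, hηγ, hMη⟩ : ∃ η, 0 < η ∧ β + η ≤ γ ∧ 2 * M * η < ε := by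
    refine ⟨min (γ - β) (ε / (2 * (M + 1))), lt_min (by linarith) (by positivity),
      by linarith [min_le_left (γ - β) (ε / (2 * (M + 1)))], ?_⟩
    calc 2 * M * min (γ - β) (ε / (2 * (M + 1))) ≤ 2 * M * (ε / (2 * (M + 1))) := by
          gcongr; exact min_le_right _ _
      _ < ε := by rw [mul_div_assoc', div_lt_iff₀ (by positivity)]; nlinarith
  obtain ⟨x₀, hx₀, hmin⟩ := isCompact_Icc.exists_isMinOn hne
    (hm.continuous.comp (continuous_add_const η) |>.sub hm.continuous).continuousOn
  have haβ : a ≤ β := nonempty_Icc.1 hne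
  have hd : 0 < m (x₀ + η) - m x₀ := sub_pos.2 <|
    hmono ⟨hx₀.1, by linarith [hx₀.2]⟩ ⟨by linarith [hx₀.1], by linarith [hx₀.2]⟩ (by linarith)
  have hγβ : 0 < m γ - m β :=
    sub_pos.2 <| hmono ⟨haβ, by linarith⟩ ⟨by linarith, hγb.le⟩ hβγ
  have hlim : Tendsto (fun j => exp (-(2 * s j * (m γ - m β))) / (b - γ)
      + 2 * M * (η + exp (-(2 * s j * (m (x₀ + η) - m x₀))))) atTop
      (𝓝 (0 / (b - γ) + 2 * M * (η + 0))) :=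
    ((tendsto_exp_neg_mul hs hγβ).div_const _).add
      ((tendsto_exp_neg_mul hs hd).const_add η |>.const_mul _)
  rw [zero_div, zero_add, add_zero] at hlim
  filter_upwards [hlim.eventually (gt_mem_nhds hMη), hs.eventually_ge_atTop 0] with j hj hsj x hx
  rw [Pi.zero_apply, dist_zero_left, norm_of_nonneg (sq_nonneg _)]
  refine lt_of_le_of_lt ?_ hj
  exact sq_le_of_monotoneOn (hv j) hm (hflux j) (hnorm j) hsj hη.le (ha.trans hx.1) hx.2
    hηγ hγb hb
    (hmono.monotoneOn.mono (Icc_subset_Icc hx.1 le_rfl)) (hmin hx)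

theorem tendstoUniformlyOn_sq_of_strictAntiOn (hv : ∀ j, Differentiable ℝ (v j))
    (hm : Differentiable ℝ m) (hflux : ∀ j, ∀ t ∈ Icc (0:ℝ) 1, |flux m (s j) (v j) t| ≤ M)
    (hnorm : ∀ j, ∫ t in (0:ℝ)..1, v j t ^ 2 = 1) (hs : Tendsto s atTop atTop)
    (hanti : StrictAntiOn m (Icc a b)) (ha : 0 ≤ a) (hb : b ≤ 1) {α : ℝ} (hα : a < α) :
    TendstoUniformlyOn (fun j x => v j x ^ 2) 0 atTop (Icc α b) := by
  have hrefl : Differentiable ℝ fun t : ℝ => 1 - t := by fun_prop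
  have hreflected := tendstoUniformlyOn_sq_of_strictMonoOn (m := fun t => m (1 - t))
    (v := fun j t => v j (1 - t)) (a := 1 - b) (b := 1 - a) (β := 1 - α)
    (fun j => (hv j).comp hrefl) (hm.comp hrefl)
    (fun j t ht => by
      rw [flux_comp_one_sub, abs_neg]
      exact hflux j _ ⟨by linarith [ht.2], by linarith [ht.1]⟩)
    (fun j => (intervalIntegral.integral_comp_sub_left (fun t => v j t ^ 2) 1).trans
      (by simpa using hnorm j)) hs
    (hanti.comp (fun x _ y _ hxy => by linarith)
      fun t ht => ⟨by linarith [ht.2], by linarith [ht.1]⟩)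
    (by linarith) (by linarith) (by linarith)
  convert hreflected.comp fun x => 1 - x using 1
  · ext j x
    simp
  · rfl
  · rw [preimage_const_sub_Icc, sub_sub_cancel, sub_sub_cancel]

end Decay

theorem measure_Icc_eq_zero_of_tendstoUniformlyOn {μ : Measure ℝ} [IsFiniteMeasure μ]
    {f : ℕ → ℝ → ℝ} (hweak : ∀ ζ : ℝ → ℝ, Continuous ζ → Tendsto
      (fun j => ∫ x in (0:ℝ)..1, f j x * ζ x) atTop (𝓝 (∫ x in Icc (0:ℝ) 1, ζ x ∂μ)))
    {α β α' β' : ℝ} (hunif : TendstoUniformlyOn f 0 atTop (Icc α β)) (hα : 0 ≤ α)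
    (hβ : β ≤ 1) (hαα' : α < α') (hβ'β : β' < β) :
    μ (Icc α' β') = 0 := by
  obtain ⟨ζ, hζ₀, hζ₁, hζ⟩ := exists_continuous_zero_one_of_isClosed isOpen_Ioo.isClosed_compl
    isClosed_Icc (disjoint_compl_left_iff_subset.2 (Icc_subset_Ioo hαα' hβ'β))
  have hlim : ∫ x in Icc (0:ℝ) 1, ζ x ∂μ ≤ 0 := by
    refine le_of_forall_pos_le_add fun ε hε => le_of_tendsto (hweak ζ ζ.continuous) ?_
    filter_upwards [Metric.tendstoUniformlyOn_iff.1 hunif ε hε] with j hj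
    have hbound : ∀ x, ‖f j x * ζ x‖ ≤ ε := fun x => by
      by_cases hx : x ∈ Ioo α β
      · have hfx := hj x (Ioo_subset_Icc_self hx)
        rw [Pi.zero_apply, dist_zero_left] at hfx
        rw [norm_mul, Real.norm_of_nonneg (hζ x).1]
        exact (mul_le_of_le_one_right (norm_nonneg _) (hζ x).2).trans hfx.le
      · rw [hζ₀ hx, Pi.zero_apply, mul_zero, norm_zero]
        exact hε.le
    calc ∫ x in (0:ℝ)..1, f j x * ζ x ≤ ‖∫ x in (0:ℝ)..1, f j x * ζ x‖ := Real.le_norm_self _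
      _ ≤ ε * |1 - 0| := intervalIntegral.norm_integral_le_of_norm_le_const fun x _ => hbound x
      _ = 0 + ε := by simp
  have hmass : μ.real (Icc α' β') ≤ ∫ x in Icc (0:ℝ) 1, ζ x ∂μ :=
    calc μ.real (Icc α' β') = ∫ x in Icc α' β', ζ x ∂μ := by
          rw [setIntegral_congr_fun measurableSet_Icc hζ₁]; simp
      _ ≤ _ := setIntegral_mono_set ζ.continuous.integrableOn_Icc
          (ae_of_all _ fun x => (hζ x).1)
          (Icc_subset_Icc (by linarith) (by linarith)).eventuallyLE
  exact (measureReal_eq_zero_iff (measure_ne_top μ _)).1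
    (le_antisymm (hmass.trans hlim) measureReal_nonneg)

theorem measure_open_interval_zero_of_strictMono_or_strictAnti_general
    (m c : ℝ → ℝ) (hm : ContDiff ℝ 2 m) (hc : Continuous c)
    (w : ℝ → ℝ → ℝ)
    (hw : ∀ s > (0:ℝ), IsPrincipalEigenfunction m c (lambdaN m c s) s (w s))
    (μ : Measure ℝ) [IsProbabilityMeasure μ]
    (sj : ℕ → ℝ) (hsjpos : ∀ j, 0 < sj j) (hsj : Tendsto sj atTop atTop)
    (hweak : ∀ ζ : ℝ → ℝ, Continuous ζ →
      Tendsto (fun j => ∫ x in (0:ℝ)..1, (w (sj j) x) ^ 2 * ζ x) atTop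
        (nhds (∫ x in Set.Icc (0:ℝ) 1, ζ x ∂μ)))
    (a₁ a₂ : ℝ) (ha₁ : 0 ≤ a₁) (ha₂ : a₂ ≤ 1)
    (hmono : StrictMonoOn m (Set.Icc a₁ a₂) ∨ StrictAntiOn m (Set.Icc a₁ a₂)) :
    μ (Set.Ioo a₁ a₂) = 0 := by
  obtain ⟨C, hC⟩ := isCompact_Icc.exists_bound_of_continuousOn (hc.continuousOn (s := Icc 0 1))
  have hbounds : ∀ x ∈ Icc (0:ℝ) 1, -C ≤ c x ∧ c x ≤ C := fun x hx => abs_le.1 (hC x hx)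
  have hflux : ∀ j, ∀ t ∈ Icc (0:ℝ) 1, |flux m (sj j) (w (sj j)) t| ≤ 2 * C := by
    intro j
    have hlam := lambdaN_mem_Icc (s := sj j) hm.continuous hc (fun x hx => (hbounds x hx).1)
      (fun x hx => (hbounds x hx).2)
    refine fun t => abs_flux_le_of_isPrincipalEigenfunction hm (hw _ (hsjpos j)) fun x hx => ?_
    exact abs_le.2 ⟨by linarith [hlam.2, hbounds x hx], by linarith [hlam.1, hbounds x hx]⟩
  have hv : ∀ j, Differentiable ℝ (w (sj j)) := fun j =>
    (hw _ (hsjpos j)).1.differentiable two_ne_zero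
  have hnorm : ∀ j, ∫ t in (0:ℝ)..1, w (sj j) t ^ 2 = 1 := fun j => (hw _ (hsjpos j)).2.2.2.2.2
  have hmd := hm.differentiable two_ne_zero
  have hunif : ∀ α β, a₁ < α → β < a₂ →
      TendstoUniformlyOn (fun j x => w (sj j) x ^ 2) 0 atTop (Icc α β) := by
    intro α β hα hβ
    rcases hmono with hinc | hdec
    · exact (tendstoUniformlyOn_sq_of_strictMonoOn hv hmd hflux hnorm hsj hinc ha₁ ha₂ hβ).mono
        (Icc_subset_Icc_left hα.le)
    · exact (tendstoUniformlyOn_sq_of_strictAntiOn hv hmd hflux hnorm hsj hdec ha₁ ha₂ hα).mono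
        (Icc_subset_Icc_right hβ.le)
  refine measure_null_of_locally_null _ fun x hx => ⟨Icc ((a₁ + x) / 2) ((x + a₂) / 2),
    mem_nhdsWithin_of_mem_nhds (Icc_mem_nhds (by linarith [hx.1]) (by linarith [hx.2])), ?_⟩
  exact measure_Icc_eq_zero_of_tendstoUniformlyOn hweak
    (hunif ((3 * a₁ + x) / 4) ((x + 3 * a₂) / 4) (by linarith [hx.1]) (by linarith [hx.2]))
    (by linarith [hx.1]) (by linarith [hx.2]) (by linarith [hx.1]) (by linarith [hx.2])

/-- Lemma 2.4: if `m` is strictly monotone on `[a₁,a₂] ⊆ [0,1]`, then the weak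
limit measure `μ` of the squared eigenfunctions gives no mass to `(a₁,a₂)`. -/
theorem measure_open_interval_zero_of_strictMono_or_strictAnti
    (m c : ℝ → ℝ) (hm : ContDiff ℝ 2 m) (hc : Continuous c)
    (w : ℝ → ℝ → ℝ)
    (hw : ∀ s > (0:ℝ), IsPrincipalEigenfunction m c (lambdaN m c s) s (w s))
    (μ : Measure ℝ) [IsProbabilityMeasure μ] (hμsupp : μ (Set.Icc (0:ℝ) 1)ᶜ = 0)
    (sj : ℕ → ℝ) (hsjpos : ∀ j, 0 < sj j) (hsj : Tendsto sj atTop atTop)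
    (hweak : ∀ ζ : ℝ → ℝ, Continuous ζ →
      Tendsto (fun j => ∫ x in (0:ℝ)..1, (w (sj j) x) ^ 2 * ζ x) atTop
        (nhds (∫ x in Set.Icc (0:ℝ) 1, ζ x ∂μ)))
    (a₁ a₂ : ℝ) (ha₁ : 0 ≤ a₁) (h12 : a₁ < a₂) (ha₂ : a₂ ≤ 1)
    (hmono : StrictMonoOn m (Set.Icc a₁ a₂) ∨ StrictAntiOn m (Set.Icc a₁ a₂)) :
    μ (Set.Ioo a₁ a₂) = 0 :=
  measure_open_interval_zero_of_strictMono_or_strictAnti_general m c hm hc w hw μ sj hsjpos hsj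
    hweak a₁ a₂ ha₁ ha₂ hmono
end
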